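/- arXiv:1606.05479 — 7 statements merged into one kernel-verified Lean document; each statement's English description precedes it below -/
import Mathlib

section
/- Let w be a measurable weight on (0,∞) such that for every z ∈ ℂ₊ the function t ↦ e^{−t z̄}/w(t) belongs to L²_w(0,∞), and set k_z(ζ) := ∫₀^∞ e^{−t(ζ + z̄)}/w(t) dt for z, ζ ∈ ℂ₊. Let (λ_k)_{k∈ℕ} be a sequence in the open left half-plane, (b_k)_{k∈ℕ} a sequence of complex numbers, and μ := Σ_{k=1}^∞ |b_k|² δ_{−λ_k}. If Σ_{k=1}^∞ Σ_{l=1}^∞ |b_k b_l Re(k_{−λ_k}(−λ_l))|² < ∞, then the Laplace–Carleson embedding 𝔏 : L²_w(0,∞) → L²(ℂ₊, μ) is bounded. -/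
open MeasureTheory Set Complex Filter ENNReal

/-- The Laplace transform of `f : (0,∞) → ℂ` at `z`. -/
noncomputable def laplaceT (f : ℝ → ℂ) (z : ℂ) : ℂ :=
  ∫ t in Set.Ioi (0:ℝ), f t * Complex.exp (-(t : ℂ) * z)

/-- The norm of `f` in the weighted space `L^p_w(0,∞)` (as an extended real). -/
noncomputable def lpwNorm (p : ℝ) (w : ℝ → ℝ) (f : ℝ → ℂ) : ℝ≥0∞ :=
  (∫⁻ t in Set.Ioi (0:ℝ), (‖f t‖₊ : ℝ≥0∞) ^ p * ENNReal.ofReal (w t)) ^ (1/p)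

/-- Boundedness of the Laplace–Carleson embedding `𝔏 : L^p_w(0,∞) → L^q(ℂ₊, μ)`. -/
def lcBounded (p q : ℝ) (w : ℝ → ℝ) (μ : Measure ℂ) : Prop :=
  ∃ C > 0, ∀ f : ℝ → ℂ, Measurable f →
    (∫⁻ z, (‖laplaceT f z‖₊ : ℝ≥0∞) ^ q ∂μ) ^ (1/q) ≤ ENNReal.ofReal C * lpwNorm p w f

/-- The reproducing kernel `k_z(ζ) = ∫₀^∞ e^{-t(ζ + z̄)}/w(t) dt` of `𝔏(L²_w(0,∞))`. -/
noncomputable def kern (w : ℝ → ℝ) (z ζ : ℂ) : ℂ :=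
  ∫ t in Set.Ioi (0:ℝ), Complex.exp (-(t : ℂ) * (ζ + (starRingEnd ℂ) z)) / (w t : ℂ)

/-!
The kernels `k_z(t) = e^{-t z̄}/w(t)` lie in `L²_w`, and there `𝔏f(z) = ⟪k_z, f⟫` and
`⟪k_z, k_ζ⟫ = k_ζ(z)`. With `z_k = -λ_k` and a finite set `F` of indices, let
`T = ∑ |b_k|² |𝔏f(z_k)|²` and `g = ∑ |b_k|² 𝔏f(z_k) k_{z_k}`, so that `T = ⟪g, f⟫ ≤ ‖g‖ ‖f‖`.
Splitting the coefficients of `g` into real and imaginary parts, each part has squared norm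
`∑ x_k x_l Re k_{z_l}(z_k)` with real `x_k`, which Cauchy–Schwarz in `ℓ²(F × F)` bounds by
`T (∑ |b_k b_l Re k_{z_k}(z_l)|²)^{1/2}`. Hence `T ≤ 4 (∑ |b_k b_l Re k_{z_k}(z_l)|²)^{1/2} ‖f‖²`,
uniformly in `F`.
-/

theorem Finset.sum_sum_mul_le_of_abs_le {ι : Type*} (s : Finset ι) (G : ι → ι → ℝ)
    {x β u : ι → ℝ} (hx : ∀ k, |x k| ≤ β k * u k) :
    ∑ k ∈ s, ∑ l ∈ s, x k * x l * G k l ≤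
      (∑ k ∈ s, u k ^ 2) * √(∑ p ∈ s ×ˢ s, (β p.1 * β p.2 * |G p.1 p.2|) ^ 2) := by
  have hx' (k l : ι) : x k * x l * G k l ≤ u k * u l * (β k * β l * |G k l|) :=
    calc x k * x l * G k l ≤ |x k| * |x l| * |G k l| := by
          rw [← abs_mul, ← abs_mul]; exact le_abs_self _
      _ ≤ (β k * u k) * (β l * u l) * |G k l| := by
          gcongr
          · exact (abs_nonneg _).trans (hx k)
          · exact hx k
          · exact hx l
      _ = u k * u l * (β k * β l * |G k l|) := by ring
  have hu2 : √(∑ p ∈ s ×ˢ s, (u p.1 * u p.2) ^ 2) = ∑ k ∈ s, u k ^ 2 := by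
    rw [Finset.sum_product]
    simp_rw [mul_pow]
    rw [← Finset.sum_mul_sum, ← sq, Real.sqrt_sq (Finset.sum_nonneg fun k _ => sq_nonneg _)]
  calc ∑ k ∈ s, ∑ l ∈ s, x k * x l * G k l
      ≤ ∑ p ∈ s ×ˢ s, u p.1 * u p.2 * (β p.1 * β p.2 * |G p.1 p.2|) := by
        rw [Finset.sum_product]
        exact Finset.sum_le_sum fun k _ => Finset.sum_le_sum fun l _ => hx' k l
    _ ≤ _ := Real.sum_mul_le_sqrt_mul_sqrt _ _ _
    _ = _ := by rw [hu2]

section InnerProduct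

variable {𝕜 E ι : Type*} [RCLike 𝕜] [NormedAddCommGroup E] [InnerProductSpace 𝕜 E]

open RCLike

theorem norm_sum_ofReal_smul_sq (s : Finset ι) (x : ι → ℝ) (v : ι → E) :
    ‖∑ k ∈ s, (x k : 𝕜) • v k‖ ^ 2 = ∑ k ∈ s, ∑ l ∈ s, x k * x l * re (inner 𝕜 (v k) (v l)) := by
  rw [@norm_sq_eq_re_inner 𝕜, sum_inner, map_sum]
  refine Finset.sum_congr rfl fun k _ => ?_
  rw [inner_sum, map_sum]
  refine Finset.sum_congr rfl fun l _ => ?_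
  rw [inner_smul_left, inner_smul_right, RCLike.conj_ofReal, ← mul_assoc, ← RCLike.ofReal_mul,
    RCLike.re_ofReal_mul]

theorem sum_norm_sq_mul_norm_inner_sq_le (s : Finset ι) (b : ι → 𝕜) (v : ι → E) (x : E) :
    ∑ k ∈ s, ‖b k‖ ^ 2 * ‖inner 𝕜 (v k) x‖ ^ 2 ≤
      4 * √(∑ p ∈ s ×ˢ s, (‖b p.1‖ * ‖b p.2‖ * |re (inner 𝕜 (v p.1) (v p.2))|) ^ 2) * ‖x‖ ^ 2 := by
  set T := ∑ k ∈ s, ‖b k‖ ^ 2 * ‖inner 𝕜 (v k) x‖ ^ 2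
  set M := √(∑ p ∈ s ×ˢ s, (‖b p.1‖ * ‖b p.2‖ * |re (inner 𝕜 (v p.1) (v p.2))|) ^ 2)
  set a : ι → 𝕜 := fun k => (‖b k‖ ^ 2 : 𝕜) * inner 𝕜 (v k) x
  have hT : re (inner 𝕜 (∑ k ∈ s, a k • v k) x) = T := by
    rw [sum_inner, map_sum]
    refine Finset.sum_congr rfl fun k _ => ?_
    rw [inner_smul_left, map_mul (starRingEnd 𝕜), map_pow, RCLike.conj_ofReal, mul_assoc,
      RCLike.conj_mul, ← RCLike.ofReal_pow, ← RCLike.ofReal_pow, ← RCLike.ofReal_mul,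
      RCLike.ofReal_re]
  have hpart (y : ι → ℝ) (hy : ∀ k, |y k| ≤ ‖a k‖) : ‖∑ k ∈ s, (y k : 𝕜) • v k‖ ≤ √(T * M) := by
    refine Real.le_sqrt_of_sq_le ?_
    have hya (k : ι) : |y k| ≤ ‖b k‖ * (‖b k‖ * ‖inner 𝕜 (v k) x‖) := by
      refine (hy k).trans_eq ?_
      simp only [a, norm_mul, norm_pow, RCLike.norm_ofReal, abs_norm]; ring
    calc ‖∑ k ∈ s, (y k : 𝕜) • v k‖ ^ 2
        = ∑ k ∈ s, ∑ l ∈ s, y k * y l * re (inner 𝕜 (v k) (v l)) := norm_sum_ofReal_smul_sq _ _ _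
      _ ≤ (∑ k ∈ s, (‖b k‖ * ‖inner 𝕜 (v k) x‖) ^ 2) * M :=
        Finset.sum_sum_mul_le_of_abs_le s _ hya
      _ = T * M := by simp only [T, mul_pow]
  have hg : ‖∑ k ∈ s, a k • v k‖ ≤ 2 * √(T * M) := by
    have hsplit : ∑ k ∈ s, a k • v k =
        ∑ k ∈ s, (re (a k) : 𝕜) • v k + (I : 𝕜) • ∑ k ∈ s, (im (a k) : 𝕜) • v k := by
      rw [Finset.smul_sum, ← Finset.sum_add_distrib]
      refine Finset.sum_congr rfl fun k _ => ?_
      rw [smul_smul, ← add_smul, mul_comm, RCLike.re_add_im]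
    rw [hsplit, two_mul]
    refine (norm_add_le _ _).trans (add_le_add (hpart _ fun k => abs_re_le_norm _) ?_)
    have hI : ‖(I : 𝕜)‖ ≤ 1 := by rw [RCLike.norm_I]; split_ifs <;> norm_num
    rw [norm_smul]
    exact (mul_le_of_le_one_left (norm_nonneg _) hI).trans (hpart _ fun k => abs_im_le_norm _)
  have hT0 : 0 ≤ T := Finset.sum_nonneg fun k _ => by positivity
  have hTle : T ≤ 2 * √(T * M) * ‖x‖ :=
    calc T = re (inner 𝕜 (∑ k ∈ s, a k • v k) x) := hT.symm
      _ ≤ ‖∑ k ∈ s, a k • v k‖ * ‖x‖ := re_inner_le_norm _ _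
      _ ≤ 2 * √(T * M) * ‖x‖ := by gcongr
  have hM0 : 0 ≤ M := Real.sqrt_nonneg _
  have hsq : √(T * M) ^ 2 = T * M := Real.sq_sqrt (mul_nonneg hT0 hM0)
  have hT2 : T ^ 2 ≤ T * (4 * M * ‖x‖ ^ 2) :=
    calc T ^ 2 ≤ (2 * √(T * M) * ‖x‖) ^ 2 := pow_le_pow_left₀ hT0 hTle 2
      _ = T * (4 * M * ‖x‖ ^ 2) := by rw [mul_pow, mul_pow, hsq]; ring
  rcases hT0.eq_or_lt with hT0 | hTpos
  · rw [← hT0]; positivity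
  · exact le_of_mul_le_mul_left (by rwa [← sq]) hTpos

theorem tsum_ofReal_norm_sq_mul_norm_inner_sq_rpow_le (b : ι → 𝕜) (v : ι → E)
    (hsum : Summable fun p : ι × ι =>
      (‖b p.1‖ * ‖b p.2‖ * |re (inner 𝕜 (v p.1) (v p.2))|) ^ 2) (x : E) :
    (∑' k, ENNReal.ofReal (‖b k‖ ^ 2 * ‖inner 𝕜 (v k) x‖ ^ 2)) ^ (1 / 2 : ℝ) ≤ ENNReal.ofReal
      (2 * √√(∑' p : ι × ι, (‖b p.1‖ * ‖b p.2‖ * |re (inner 𝕜 (v p.1) (v p.2))|) ^ 2)) * ‖x‖ₑ := by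
  set M := √(∑' p : ι × ι, (‖b p.1‖ * ‖b p.2‖ * |re (inner 𝕜 (v p.1) (v p.2))|) ^ 2)
  have hsum_le : ∑' k, ENNReal.ofReal (‖b k‖ ^ 2 * ‖inner 𝕜 (v k) x‖ ^ 2) ≤
      ENNReal.ofReal (4 * M * ‖x‖ ^ 2) := by
    rw [ENNReal.tsum_eq_iSup_sum]
    refine iSup_le fun s => ?_
    rw [← ENNReal.ofReal_sum_of_nonneg fun k _ => by positivity]
    refine ENNReal.ofReal_le_ofReal ((sum_norm_sq_mul_norm_inner_sq_le s b v x).trans ?_)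
    gcongr
    exact Real.sqrt_le_sqrt (hsum.sum_le_tsum _ fun p _ => sq_nonneg _)
  calc _ ≤ ENNReal.ofReal (4 * M * ‖x‖ ^ 2) ^ (1 / 2 : ℝ) := by gcongr
    _ = ENNReal.ofReal (2 * √M) * ‖x‖ₑ := by
      rw [ENNReal.ofReal_rpow_of_nonneg (by positivity) (by norm_num), ← Real.sqrt_eq_rpow,
        ← ofReal_norm, ← ENNReal.ofReal_mul (by positivity), Real.sqrt_mul (by positivity),
        Real.sqrt_sq (norm_nonneg x), Real.sqrt_mul (by norm_num),
        show √(4 : ℝ) = 2 by rw [show (4 : ℝ) = 2 ^ 2 by norm_num, Real.sqrt_sq two_pos.le]]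

end InnerProduct

noncomputable def weightMeasure (w : ℝ → ℝ) : Measure ℝ :=
  (volume.restrict (Ioi 0)).withDensity fun t => ENNReal.ofReal (w t)

noncomputable def laplaceKernel (w : ℝ → ℝ) (z : ℂ) (t : ℝ) : ℂ :=
  Complex.exp (-(t : ℂ) * (starRingEnd ℂ) z) / (w t : ℂ)

section WeightedL2

variable {w : ℝ → ℝ}

theorem lpwNorm_eq_eLpNorm {p : ℝ} (hp : 0 < p) (hw : Measurable w) {f : ℝ → ℂ}
    (hf : Measurable f) : lpwNorm p w f = eLpNorm f (ENNReal.ofReal p) (weightMeasure w) := by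
  rw [eLpNorm_eq_lintegral_rpow_enorm_toReal (by simpa using hp) ENNReal.ofReal_ne_top,
    ENNReal.toReal_ofReal hp.le, weightMeasure,
    lintegral_withDensity_eq_lintegral_mul _ (by fun_prop) (by fun_prop), lpwNorm]
  simp_rw [Pi.mul_apply, mul_comm (ENNReal.ofReal _), enorm_eq_nnnorm]

theorem memLp_of_lpwNorm_lt_top (hw : Measurable w) {f : ℝ → ℂ} (hf : Measurable f)
    (h : lpwNorm 2 w f < ⊤) : MemLp f 2 (weightMeasure w) :=
  ⟨hf.aestronglyMeasurable, by rwa [lpwNorm_eq_eLpNorm two_pos hw hf, ENNReal.ofReal_ofNat] at h⟩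

theorem inner_toLp_eq_integral (hw : Measurable w) (hw0 : ∀ t > 0, 0 ≤ w t)
    {f g : ℝ → ℂ} (hf : MemLp f 2 (weightMeasure w)) (hg : MemLp g 2 (weightMeasure w)) :
    inner ℂ (hf.toLp f) (hg.toLp g) = ∫ t in Ioi 0, (starRingEnd ℂ) (f t) * g t * w t := by
  rw [L2.inner_def]
  calc ∫ t, inner ℂ (hf.toLp f t) (hg.toLp g t) ∂weightMeasure w
      = ∫ t, inner ℂ (f t) (g t) ∂weightMeasure w := by
        refine integral_congr_ae ?_
        filter_upwards [hf.coeFn_toLp, hg.coeFn_toLp] with t hft hgt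
        rw [hft, hgt]
    _ = ∫ t in Ioi 0, (w t).toNNReal • inner ℂ (f t) (g t) :=
        integral_withDensity_eq_integral_smul (by fun_prop) _
    _ = _ := by
        refine setIntegral_congr_fun measurableSet_Ioi fun t ht => ?_
        rw [NNReal.smul_def, Real.coe_toNNReal _ (hw0 t ht), RCLike.inner_apply', Complex.real_smul,
          mul_comm]

theorem inner_laplaceKernel_toLp (hw : Measurable w) (hwpos : ∀ t > 0, 0 < w t) {z : ℂ}
    (hK : MemLp (laplaceKernel w z) 2 (weightMeasure w))
    {f : ℝ → ℂ} (hf : MemLp f 2 (weightMeasure w)) :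
    inner ℂ (hK.toLp _) (hf.toLp f) = laplaceT f z := by
  rw [inner_toLp_eq_integral hw (fun t ht => (hwpos t ht).le), laplaceT]
  refine setIntegral_congr_fun measurableSet_Ioi fun t ht => ?_
  have hwt : (w t : ℂ) ≠ 0 := ofReal_ne_zero.2 (hwpos t ht).ne'
  simp only [laplaceKernel, map_div₀, ← exp_conj, map_mul, map_neg, conj_ofReal, conj_conj]
  field_simp

theorem inner_laplaceKernel_toLp_laplaceKernel (hw : Measurable w) (hwpos : ∀ t > 0, 0 < w t)
    {z ζ : ℂ} (hz : MemLp (laplaceKernel w z) 2 (weightMeasure w))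
    (hζ : MemLp (laplaceKernel w ζ) 2 (weightMeasure w)) :
    inner ℂ (hz.toLp _) (hζ.toLp _) = kern w ζ z := by
  rw [inner_toLp_eq_integral hw (fun t ht => (hwpos t ht).le), kern]
  refine setIntegral_congr_fun measurableSet_Ioi fun t ht => ?_
  have hwt : (w t : ℂ) ≠ 0 := ofReal_ne_zero.2 (hwpos t ht).ne'
  simp only [laplaceKernel, map_div₀, ← exp_conj, map_mul, map_neg, conj_ofReal, conj_conj]
  field_simp
  rw [← Complex.exp_add]
  ring_nf

end WeightedL2

theorem lintegral_sum_smul_dirac {α ι : Type*} [MeasurableSpace α] [MeasurableSingletonClass α]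
    (c : ι → ℝ≥0∞) (a : ι → α) (F : α → ℝ≥0∞) :
    ∫⁻ z, F z ∂(Measure.sum fun k => c k • Measure.dirac (a k)) = ∑' k, c k * F (a k) := by
  simp only [lintegral_sum_measure, lintegral_smul_measure, lintegral_dirac, smul_eq_mul]

/-- if `Σ_k Σ_l |b_k b_l Re(k_{-λ_k}(-λ_l))|² < ∞` then the
Laplace–Carleson embedding `𝔏 : L²_w(0,∞) → L²(ℂ₊, μ)` is bounded. -/
theorem laplace_carleson_bounded_of_kernel_square_summable
    (w : ℝ → ℝ) (hw : Measurable w) (hwpos : ∀ t > 0, 0 < w t)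
    (hker : ∀ z : ℂ, 0 < z.re →
      lpwNorm 2 w (fun t => Complex.exp (-(t : ℂ) * (starRingEnd ℂ) z) / (w t : ℂ)) < ⊤)
    (lam : ℕ → ℂ) (hlam : ∀ k, (lam k).re < 0) (b : ℕ → ℂ)
    (μ : Measure ℂ)
    (hμ : μ = Measure.sum fun k : ℕ =>
      (ENNReal.ofReal (‖b k‖ ^ 2)) • Measure.dirac (-(lam k)))
    (hsum : Summable fun kl : ℕ × ℕ =>
      (‖b kl.1‖ * ‖b kl.2‖ * |(kern w (-(lam kl.1)) (-(lam kl.2))).re|) ^ 2) :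
    lcBounded 2 2 w μ := by
  have hK (k : ℕ) : MemLp (laplaceKernel w (-lam k)) 2 (weightMeasure w) :=
    memLp_of_lpwNorm_lt_top hw (by unfold laplaceKernel; fun_prop)
      (hker _ (by simpa using hlam k))
  set v : ℕ → Lp ℂ 2 (weightMeasure w) := fun k => (hK k).toLp _
  have hv (k l : ℕ) : RCLike.re (inner ℂ (v k) (v l)) = (kern w (-lam k) (-lam l)).re := by
    rw [inner_re_symm, inner_laplaceKernel_toLp_laplaceKernel hw hwpos, RCLike.re_to_complex]
  set M := √√(∑' p : ℕ × ℕ, (‖b p.1‖ * ‖b p.2‖ * |(kern w (-lam p.1) (-lam p.2)).re|) ^ 2)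
  refine ⟨2 * M + 1, by positivity, fun f hf => ?_⟩
  by_cases hfin : lpwNorm 2 w f = ⊤
  · rw [hfin, ENNReal.mul_top (ENNReal.ofReal_pos.2 (by positivity)).ne']
    exact le_top
  have hf2 := memLp_of_lpwNorm_lt_top hw hf (lt_top_iff_ne_top.2 hfin)
  have hbound := tsum_ofReal_norm_sq_mul_norm_inner_sq_rpow_le b v (by simpa only [hv] using hsum)
    (hf2.toLp f)
  have hc (k : ℕ) : inner ℂ (v k) (hf2.toLp f) = laplaceT f (-lam k) :=
    inner_laplaceKernel_toLp hw hwpos _ _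
  simp only [hv, hc] at hbound
  rw [hμ, lintegral_sum_smul_dirac, lpwNorm_eq_eLpNorm two_pos hw hf, ENNReal.ofReal_ofNat,
    ← Lp.enorm_toLp hf2]
  have hterm (k : ℕ) : ENNReal.ofReal (‖b k‖ ^ 2) * (‖laplaceT f (-lam k)‖₊ : ℝ≥0∞) ^ (2 : ℝ) =
      ENNReal.ofReal (‖b k‖ ^ 2 * ‖laplaceT f (-lam k)‖ ^ 2) := by
    rw [ENNReal.rpow_two, ← enorm_eq_nnnorm, ← ofReal_norm, ← ENNReal.ofReal_pow (norm_nonneg _),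
      ← ENNReal.ofReal_mul (by positivity)]
  simp only [hterm]
  exact hbound.trans (by gcongr; linarith)
end

section
/- Let ν̃ be a positive regular Borel measure on [0,∞) satisfying the Δ₂-condition with constant R := sup_{r>0} ν̃[0,2r)/ν̃[0,r) < ∞, and let ν := ν̃ ⊗ λ on [0,∞) × ℝ, where λ is Lebesgue measure on ℝ. Let s > 0 satisfy 2^{s−1} > R. Then for every a ∈ ℂ₊, ∫ |z + ā|^{−s} dν(z) ≤ (2/Re(a))^s · ν(closure of Q(a)) · Σ_{k=0}^∞ (R/2^{s−1})^k; in particular there is a constant C depending only on R and s such that ∫ |z + ā|^{−s} dν(z) ≤ C ν(closure of Q(a)) / (Re(a))^s. -/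
open MeasureTheory Set Complex Filter ENNReal

/-- The Carleson square `Q(a)` centred at `a ∈ ℂ₊`. -/
def carlesonQ (a : ℂ) : Set ℂ :=
  {z : ℂ | 0 ≤ z.re ∧ z.re < 2 * a.re ∧ |z.im - a.im| ≤ a.re}

/-- The measure `ν = ν̃ ⊗ λ` on the closed right half-plane `[0,∞) × ℝ ≅ ℂ`,
where `λ` is Lebesgue measure. -/
noncomputable def prodMeasC (ν' : Measure ℝ) : Measure ℂ :=
  (ν'.prod volume).map Complex.measurableEquivRealProd.symm

/-! Exhaust the closed half-plane by the dyadic boxes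
`C k = [0, 2^(k+1) Re a) × [Im a - 2^k Re a, Im a + 2^k Re a]`, with `C 0 = Q(a)`.
On `C k \ C (k-1)` one has `|z + ā| ≥ 2^(k-1) Re a`, while iterating `Δ₂` in the first factor
and scaling Lebesgue measure in the second gives `ν(C k) ≤ (2R)^k ν(Q(a))`. Summing over `k`
yields a geometric series of ratio `2^(-s) · 2R = R / 2^(s-1) < 1`. -/

open ComplexConjugate

namespace MeasureTheory.Measure

theorem measure_Ico_two_pow_mul_le (μ : Measure ℝ) {c : ℝ≥0∞}
    (hΔ₂ : ∀ r > 0, μ (Ico 0 (2 * r)) ≤ c * μ (Ico 0 r)) {r : ℝ} (hr : 0 < r) (k : ℕ) :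
    μ (Ico 0 (2 ^ k * r)) ≤ c ^ k * μ (Ico 0 r) := by
  induction k with
  | zero => simp
  | succ k ih =>
    calc μ (Ico 0 (2 ^ (k + 1) * r)) = μ (Ico 0 (2 * (2 ^ k * r))) := by ring_nf
      _ ≤ c * μ (Ico 0 (2 ^ k * r)) := hΔ₂ _ (by positivity)
      _ ≤ c * (c ^ k * μ (Ico 0 r)) := by gcongr
      _ = c ^ (k + 1) * μ (Ico 0 r) := by ring

end MeasureTheory.Measure

theorem setLIntegral_iUnion_le_tsum {α : Type*} [MeasurableSpace α] (μ : Measure α)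
    {f : α → ℝ≥0∞} {C : ℕ → Set α} {c : ℕ → ℝ≥0∞}
    (hf : ∀ k, ∀ z ∈ disjointed C k, f z ≤ c k) :
    ∫⁻ z in ⋃ k, C k, f z ∂μ ≤ ∑' k, c k * μ (C k) := by
  rw [← iUnion_disjointed]
  refine (lintegral_iUnion_le _ _).trans (ENNReal.tsum_le_tsum fun k => ?_)
  calc ∫⁻ z in disjointed C k, f z ∂μ ≤ ∫⁻ _ in disjointed C k, c k ∂μ :=
        setLIntegral_mono measurable_const (hf k)
    _ ≤ c k * μ (C k) := by
        rw [setLIntegral_const]; gcongr; exact disjointed_le C k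

theorem prodMeasC_reProdIm (ν' : Measure ℝ) (s t : Set ℝ) :
    prodMeasC ν' (s ×ℂ t) = ν' s * volume t := by
  rw [prodMeasC, MeasurableEquiv.map_apply, ← Measure.prod_prod]
  rfl

theorem ae_prodMeasC_re_nonneg {ν' : Measure ℝ} (hsupp : ν' {x : ℝ | x < 0} = 0) :
    ∀ᵐ z ∂prodMeasC ν', 0 ≤ z.re := by
  have h := prodMeasC_reProdIm ν' {x | x < 0} univ
  rw [hsupp, zero_mul] at h
  refine measure_mono_null (fun z hz => ?_) h
  simpa [mem_reProdIm, not_le] using hz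

def carlesonBox (a : ℂ) (t : ℝ) : Set ℂ :=
  Ico 0 (2 * t) ×ℂ Icc (a.im - t) (a.im + t)

theorem carlesonQ_eq_carlesonBox (a : ℂ) : carlesonQ a = carlesonBox a a.re := by
  ext z
  simp only [carlesonQ, carlesonBox, mem_ofPred_eq, mem_reProdIm, mem_Ico, mem_Icc, abs_le]
  constructor <;> intro h <;> grind

theorem carlesonBox_mono (a : ℂ) : Monotone (carlesonBox a) := fun t u htu z hz => by
  simp only [carlesonBox, mem_reProdIm, mem_Ico, mem_Icc] at hz ⊢
  refine ⟨⟨hz.1.1, by linarith⟩, by linarith, by linarith⟩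

theorem prodMeasC_carlesonBox (ν' : Measure ℝ) (a : ℂ) (t : ℝ) :
    prodMeasC ν' (carlesonBox a t) = ν' (Ico 0 (2 * t)) * ENNReal.ofReal (2 * t) := by
  rw [carlesonBox, prodMeasC_reProdIm, Real.volume_Icc]
  ring_nf

theorem iUnion_carlesonBox_two_pow_mul {a : ℂ} (ha : 0 < a.re) :
    ⋃ k : ℕ, carlesonBox a (2 ^ k * a.re) = {z : ℂ | 0 ≤ z.re} := by
  refine Subset.antisymm (iUnion_subset fun k z hz => hz.1.1) fun z hz => ?_
  obtain ⟨k, hk⟩ := pow_unbounded_of_one_lt (max z.re |z.im - a.im| / a.re) one_lt_two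
  rw [div_lt_iff₀ ha, max_lt_iff, abs_lt] at hk
  have : 0 ≤ 2 ^ k * a.re := by positivity
  exact mem_iUnion.2 ⟨k, ⟨hz, by linarith⟩, by linarith, by linarith⟩

theorem re_add_re_le_norm_add_conj (z a : ℂ) : z.re + a.re ≤ ‖z + conj a‖ := by
  simpa using (le_abs_self _).trans (abs_re_le_norm (z + conj a))

theorem abs_im_sub_im_le_norm_add_conj (z a : ℂ) : |z.im - a.im| ≤ ‖z + conj a‖ := by
  simpa [sub_eq_add_neg] using abs_im_le_norm (z + conj a)

theorem le_norm_add_conj_of_notMem_carlesonBox {z a : ℂ} {t : ℝ} (hz : 0 ≤ z.re)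
    (ha : 0 ≤ a.re) (hzt : z ∉ carlesonBox a t) : t ≤ ‖z + conj a‖ := by
  have hre := re_add_re_le_norm_add_conj z a
  have him := abs_im_sub_im_le_norm_add_conj z a
  simp only [carlesonBox, mem_reProdIm, mem_Ico, mem_Icc, not_and_or, not_lt, not_le] at hzt
  have := norm_nonneg (z + conj a)
  rcases hzt with (h | h) | h | h
  · linarith
  · linarith
  · linarith [neg_abs_le (z.im - a.im)]
  · linarith [le_abs_self (z.im - a.im)]

theorem prodMeasC_carlesonBox_two_pow_mul_le {ν' : Measure ℝ} {c : ℝ≥0∞}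
    (hΔ₂ : ∀ r > 0, ν' (Ico 0 (2 * r)) ≤ c * ν' (Ico 0 r)) (a : ℂ) {t : ℝ} (ht : 0 < t)
    (k : ℕ) :
    prodMeasC ν' (carlesonBox a (2 ^ k * t)) ≤
      (2 * c) ^ k * prodMeasC ν' (carlesonBox a t) := by
  rw [prodMeasC_carlesonBox, prodMeasC_carlesonBox, mul_left_comm 2 (2 ^ k),
    ENNReal.ofReal_mul (by positivity), ENNReal.ofReal_pow zero_le_two, ENNReal.ofReal_ofNat]
  calc ν' (Ico 0 (2 ^ k * (2 * t))) * (2 ^ k * ENNReal.ofReal (2 * t))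
      ≤ c ^ k * ν' (Ico 0 (2 * t)) * (2 ^ k * ENNReal.ofReal (2 * t)) := by
        gcongr; exact ν'.measure_Ico_two_pow_mul_le hΔ₂ (by positivity) k
    _ = (2 * c) ^ k * (ν' (Ico 0 (2 * t)) * ENNReal.ofReal (2 * t)) := by ring

theorem half_two_pow_mul_re_le_norm_add_conj {a z : ℂ} (ha : 0 < a.re) {k : ℕ}
    (hz : z ∈ disjointed (fun k : ℕ => carlesonBox a (2 ^ k * a.re)) k) :
    2 ^ k * a.re / 2 ≤ ‖z + conj a‖ := by
  cases k with
  | zero =>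
    rw [disjointed_zero] at hz
    have := re_add_re_le_norm_add_conj z a
    have : 0 ≤ z.re := hz.1.1
    linarith
  | succ k =>
    have hmono : Monotone fun k : ℕ => carlesonBox a (2 ^ k * a.re) :=
      (carlesonBox_mono a).comp fun i j hij => by gcongr; norm_num
    rw [hmono.disjointed_add_one] at hz
    have := le_norm_add_conj_of_notMem_carlesonBox hz.1.1.1 ha.le hz.2
    rw [pow_succ]
    linarith

theorem coe_nnnorm_rpow_neg_le {E : Type*} [SeminormedAddGroup E] {w : E} {b s : ℝ}
    (hb : 0 < b) (hbw : b ≤ ‖w‖) (hs : 0 ≤ s) :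
    (‖w‖₊ : ℝ≥0∞) ^ (-s) ≤ ENNReal.ofReal (b ^ (-s)) := by
  rw [← ENNReal.ofReal_rpow_of_pos hb, ← ENNReal.ofReal_coe_nnreal, coe_nnnorm]
  rw [ENNReal.rpow_neg, ENNReal.rpow_neg, ENNReal.inv_le_inv]
  exact ENNReal.rpow_le_rpow (ENNReal.ofReal_le_ofReal hbw) hs

theorem two_pow_mul_half_rpow_neg_mul (R s : ℝ) {r : ℝ} (hr : 0 < r) (k : ℕ) :
    ((2 : ℝ) ^ k * r / 2) ^ (-s) * (2 * R) ^ k = (2 / r) ^ s * (R / 2 ^ (s - 1)) ^ k := by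
  have h2s : (0 : ℝ) < 2 ^ s := by positivity
  rw [Real.rpow_sub_one two_ne_zero, mul_div_assoc, Real.rpow_neg (by positivity),
    Real.mul_rpow (by positivity) (by positivity), ← Real.rpow_pow_comm zero_le_two,
    Real.div_rpow zero_le_two hr.le, Real.div_rpow hr.le zero_le_two]
  field_simp
  rw [← mul_pow, mul_div_cancel₀ _ h2s.ne']

theorem lintegral_rpow_neg_le_prodMeasC_carlesonQ {ν' : Measure ℝ}
    (hsupp : ν' {x : ℝ | x < 0} = 0) {R : ℝ} (hR0 : 0 ≤ R)
    (hΔ₂ : ∀ r > 0, ν' (Ico 0 (2 * r)) ≤ ENNReal.ofReal R * ν' (Ico 0 r))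
    {s : ℝ} (hs : 0 ≤ s) (hRs : R < 2 ^ (s - 1)) {a : ℂ} (ha : 0 < a.re) :
    ∫⁻ z, (‖z + conj a‖₊ : ℝ≥0∞) ^ (-s) ∂prodMeasC ν' ≤
      ENNReal.ofReal ((2 / a.re) ^ s * ∑' k : ℕ, (R / 2 ^ (s - 1)) ^ k) *
        prodMeasC ν' (carlesonQ a) := by
  have hρ : Summable fun k : ℕ => (R / 2 ^ (s - 1)) ^ k :=
    summable_geometric_of_lt_one (by positivity) ((div_lt_one (by positivity)).2 hRs)
  calc ∫⁻ z, (‖z + conj a‖₊ : ℝ≥0∞) ^ (-s) ∂prodMeasC ν'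
      = ∫⁻ z in ⋃ k : ℕ, carlesonBox a (2 ^ k * a.re), (‖z + conj a‖₊ : ℝ≥0∞) ^ (-s)
          ∂prodMeasC ν' := by
        rw [iUnion_carlesonBox_two_pow_mul ha,
          Measure.restrict_eq_self_of_ae_mem (s := {z : ℂ | 0 ≤ z.re})
            (ae_prodMeasC_re_nonneg hsupp)]
    _ ≤ ∑' k : ℕ, ENNReal.ofReal ((2 ^ k * a.re / 2) ^ (-s)) *
          prodMeasC ν' (carlesonBox a (2 ^ k * a.re)) :=
        setLIntegral_iUnion_le_tsum _ fun k _ hz =>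
          coe_nnnorm_rpow_neg_le (by positivity) (half_two_pow_mul_re_le_norm_add_conj ha hz) hs
    _ ≤ ∑' k : ℕ, ENNReal.ofReal ((2 ^ k * a.re / 2) ^ (-s)) *
          ((2 * ENNReal.ofReal R) ^ k * prodMeasC ν' (carlesonQ a)) := by
        gcongr with k
        rw [carlesonQ_eq_carlesonBox]
        exact prodMeasC_carlesonBox_two_pow_mul_le hΔ₂ a ha k
    _ = ∑' k : ℕ, ENNReal.ofReal ((2 / a.re) ^ s * (R / 2 ^ (s - 1)) ^ k) *
          prodMeasC ν' (carlesonQ a) := by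
        congr with k
        rw [← mul_assoc, ← ENNReal.ofReal_ofNat 2, ← ENNReal.ofReal_mul zero_le_two,
          ← ENNReal.ofReal_pow (by positivity), ← ENNReal.ofReal_mul (by positivity),
          two_pow_mul_half_rpow_neg_mul R s ha]
    _ = _ := by
        rw [ENNReal.tsum_mul_right, ← ENNReal.ofReal_tsum_of_nonneg (fun k => by positivity)
          (hρ.mul_left _), tsum_mul_left]

theorem lintegral_inv_rpow_le_carleson_square_general
    (ν' : Measure ℝ) (hsupp : ν' {x : ℝ | x < 0} = 0)
    (R : ℝ) (hR0 : 0 ≤ R)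
    (hΔ₂ : ∀ r > 0, ν' (Set.Ico 0 (2 * r)) ≤ ENNReal.ofReal R * ν' (Set.Ico 0 r))
    (s : ℝ) (hs : 0 < s) (hRs : R < 2 ^ (s - 1)) :
    (∀ a : ℂ, 0 < a.re →
      ∫⁻ z, (‖z + (starRingEnd ℂ) a‖₊ : ℝ≥0∞) ^ (-s) ∂(prodMeasC ν') ≤
        ENNReal.ofReal ((2 / a.re) ^ s * ∑' k : ℕ, (R / 2 ^ (s - 1)) ^ k) *
          prodMeasC ν' (closure (carlesonQ a))) ∧
    ∃ C > 0, ∀ a : ℂ, 0 < a.re →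
      ∫⁻ z, (‖z + (starRingEnd ℂ) a‖₊ : ℝ≥0∞) ^ (-s) ∂(prodMeasC ν') ≤
        ENNReal.ofReal C * prodMeasC ν' (closure (carlesonQ a)) /
          ENNReal.ofReal (a.re ^ s) := by
  set ρ := R / 2 ^ (s - 1)
  have hρ : ρ < 1 := (div_lt_one (by positivity)).2 hRs
  have hsum_pos : 0 < ∑' k : ℕ, ρ ^ k := by
    rw [tsum_geometric_of_lt_one (by positivity) hρ]
    exact inv_pos.2 (sub_pos.2 hρ)
  have hbound : ∀ a : ℂ, 0 < a.re →
      ∫⁻ z, (‖z + conj a‖₊ : ℝ≥0∞) ^ (-s) ∂(prodMeasC ν') ≤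
        ENNReal.ofReal ((2 / a.re) ^ s * ∑' k : ℕ, ρ ^ k) *
          prodMeasC ν' (closure (carlesonQ a)) := fun a ha =>
    (lintegral_rpow_neg_le_prodMeasC_carlesonQ hsupp hR0 hΔ₂ hs.le hRs ha).trans
      (by gcongr; exact subset_closure)
  refine ⟨hbound, 2 ^ s * ∑' k : ℕ, ρ ^ k, by positivity,
    fun a ha => (hbound a ha).trans_eq ?_⟩
  rw [Real.div_rpow zero_le_two ha.le, div_mul_eq_mul_div,
    ENNReal.ofReal_div_of_pos (by positivity), div_eq_mul_inv, div_eq_mul_inv, mul_right_comm]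

/-- for `ν̃` satisfying `Δ₂` with constant `R`, `ν = ν̃ ⊗ λ`, and
`s > 0` with `2^{s-1} > R`, one has
`∫ |z + ā|^{-s} dν(z) ≤ (2/Re a)^s ν(closure Q(a)) Σ_k (R/2^{s-1})^k`;
in particular `∫ |z + ā|^{-s} dν(z) ≤ C ν(closure Q(a)) / (Re a)^s` for a constant
`C` depending only on `R` and `s`. -/
theorem lintegral_inv_rpow_le_carleson_square
    (ν' : Measure ℝ) (hreg : ν'.Regular) (hsupp : ν' {x : ℝ | x < 0} = 0)
    (R : ℝ) (hR0 : 0 ≤ R)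
    (hΔ₂ : ∀ r > 0, ν' (Set.Ico 0 (2 * r)) ≤ ENNReal.ofReal R * ν' (Set.Ico 0 r))
    (s : ℝ) (hs : 0 < s) (hRs : R < 2 ^ (s - 1)) :
    (∀ a : ℂ, 0 < a.re →
      ∫⁻ z, (‖z + (starRingEnd ℂ) a‖₊ : ℝ≥0∞) ^ (-s) ∂(prodMeasC ν') ≤
        ENNReal.ofReal ((2 / a.re) ^ s * ∑' k : ℕ, (R / 2 ^ (s - 1)) ^ k) *
          prodMeasC ν' (closure (carlesonQ a))) ∧
    ∃ C > 0, ∀ a : ℂ, 0 < a.re →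
      ∫⁻ z, (‖z + (starRingEnd ℂ) a‖₊ : ℝ≥0∞) ^ (-s) ∂(prodMeasC ν') ≤
        ENNReal.ofReal C * prodMeasC ν' (closure (carlesonQ a)) /
          ENNReal.ofReal (a.re ^ s) :=
  lintegral_inv_rpow_le_carleson_square_general ν' hsupp R hR0 hΔ₂ s hs hRs
end

section
/- Let 1 < p < ∞, 1 ≤ q < ∞, let w be a measurable weight on (0,∞), and let μ be a positive Borel measure on ℂ₊ supported on the positive real axis (0,∞). If the Laplace–Carleson embedding 𝔏 : L^p_w(0,∞) → L^q(ℂ₊, μ) is bounded, then there exists a constant C > 0 such that for every r > 0 for which the integral ∫₀^∞ e^{−r p′ t} w(t)^{−1/(p−1)} dt is finite, one has μ((0, r]) ≤ C ( ∫₀^∞ e^{−r p′ t} w(t)^{−1/(p−1)} dt )^{−q/p′}. -/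
open MeasureTheory Set Complex Filter ENNReal

open Topology

/-!
Test the embedding on the truncations `f_N = 1_{(0,N]} g` of
`g(t) = e^{-rt/(p-1)} w(t)^{-1/(p-1)} = (e^{-rt} / w(t))^{p'-1}`, the function for which
Hölder's inequality for `∫ f e^{-rt}` in `L^p_w` is an equality. Both `‖f_N‖_{L^p_w}^p` and the
lower bound `∫₀^N g(t) e^{-rt} dt ≤ 𝔏f_N(x)`, valid for `0 < x ≤ r`, equal
`J_N = ∫₀^N e^{-r p' t} w(t)^{-1/(p-1)} dt`, so boundedness gives
`J_N μ((0,r])^{1/q} ≤ C J_N^{1/p}`, i.e. `μ((0,r]) ≤ C^q J_N^{-q/p'}`; let `N → ∞`.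
The truncation is needed because `g e^{-x·}` need not be integrable for `x < r`, and a Bochner
integral of a non-integrable function is `0`.
-/

lemma laplaceT_indicator_ofReal {s : Set ℝ} (hs : MeasurableSet s) (hs0 : s ⊆ Ioi 0)
    (g : ℝ → ℝ) (x : ℝ) :
    laplaceT (s.indicator fun t => (g t : ℂ)) x = ↑(∫ t in s, g t * Real.exp (-(x * t))) := by
  have hpt : (fun t : ℝ => s.indicator (fun t => (g t : ℂ)) t * Complex.exp (-(t : ℂ) * x)) =
      s.indicator fun t => ((g t * Real.exp (-(x * t)) : ℝ) : ℂ) := by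
    ext t
    by_cases ht : t ∈ s
    · simp only [indicator_of_mem ht]
      push_cast
      ring_nf
    · simp [indicator_of_notMem ht]
  rw [laplaceT, hpt, integral_indicator hs, Measure.restrict_restrict hs,
    inter_eq_self_of_subset_left hs0, integral_complex_ofReal]

lemma enorm_laplaceT_indicator_ofReal {s : Set ℝ} (hs : MeasurableSet s) (hs0 : s ⊆ Ioi 0)
    {g : ℝ → ℝ} (hg : ∀ t ∈ s, 0 ≤ g t) {x : ℝ}
    (hint : IntegrableOn (fun t => g t * Real.exp (-(x * t))) s) :
    ‖laplaceT (s.indicator fun t => (g t : ℂ)) x‖ₑ =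
      ∫⁻ t in s, ENNReal.ofReal (g t * Real.exp (-(x * t))) := by
  have hnonneg : ∀ t ∈ s, 0 ≤ g t * Real.exp (-(x * t)) :=
    fun t ht => mul_nonneg (hg t ht) (Real.exp_pos _).le
  rw [laplaceT_indicator_ofReal hs hs0, ← ofReal_norm, Complex.norm_real,
    Real.norm_of_nonneg (setIntegral_nonneg hs hnonneg),
    ofReal_integral_eq_lintegral_ofReal hint ((ae_restrict_iff' hs).2 (ae_of_all _ hnonneg))]

lemma lintegral_mul_exp_le_enorm_laplaceT {s : Set ℝ} (hs : MeasurableSet s) (hs0 : s ⊆ Ioi 0)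
    {g : ℝ → ℝ} (hg : ∀ t ∈ s, 0 ≤ g t) {x r : ℝ} (hxr : x ≤ r)
    (hint : IntegrableOn (fun t => g t * Real.exp (-(x * t))) s) :
    ∫⁻ t in s, ENNReal.ofReal (g t * Real.exp (-(r * t))) ≤
      ‖laplaceT (s.indicator fun t => (g t : ℂ)) x‖ₑ := by
  rw [enorm_laplaceT_indicator_ofReal hs hs0 hg hint]
  refine setLIntegral_mono' hs fun t ht => ofReal_le_ofReal ?_
  have ht0 : 0 < t := hs0 ht
  exact mul_le_mul_of_nonneg_left (Real.exp_le_exp.2 (by nlinarith)) (hg t ht)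

lemma lpwNorm_indicator_ofReal {s : Set ℝ} (hs : MeasurableSet s) (hs0 : s ⊆ Ioi 0)
    {p : ℝ} (hp : 0 < p) (w : ℝ → ℝ) {g : ℝ → ℝ} (hg : ∀ t ∈ s, 0 ≤ g t) :
    lpwNorm p w (s.indicator fun t => (g t : ℂ)) =
      (∫⁻ t in s, ENNReal.ofReal (g t ^ p * w t)) ^ (1 / p) := by
  have hpt : (fun t => (‖s.indicator (fun t => (g t : ℂ)) t‖₊ : ℝ≥0∞) ^ p * ENNReal.ofReal (w t)) =
      s.indicator fun t => ENNReal.ofReal (g t ^ p * w t) := by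
    ext t
    by_cases ht : t ∈ s
    · rw [indicator_of_mem ht, indicator_of_mem ht, ← enorm_eq_nnnorm, ← ofReal_norm,
        Complex.norm_real, Real.norm_of_nonneg (hg t ht), ofReal_rpow_of_nonneg (hg t ht) hp.le,
        ← ofReal_mul (Real.rpow_nonneg (hg t ht) p)]
    · simp [indicator_of_notMem ht, zero_rpow_of_pos hp]
  rw [lpwNorm, hpt, lintegral_indicator hs, Measure.restrict_restrict hs,
    inter_eq_self_of_subset_left hs0]

lemma integrableOn_Ioc_mul_exp {g : ℝ → ℝ} {a b r : ℝ}
    (h : IntegrableOn (fun t => g t * Real.exp (-(r * t))) (Ioc a b)) (x : ℝ) :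
    IntegrableOn (fun t => g t * Real.exp (-(x * t))) (Ioc a b) := by
  refine (h.mul_continuousOn_of_subset (g' := fun t => Real.exp ((r - x) * t)) (by fun_prop)
    measurableSet_Ioc isCompact_Icc Ioc_subset_Icc_self).congr_fun (fun t _ => ?_) measurableSet_Ioc
  simp only [mul_assoc, ← Real.exp_add]
  ring_nf

lemma tendsto_setLIntegral_Ioc_natCast (F : ℝ → ℝ≥0∞) :
    Tendsto (fun n : ℕ => ∫⁻ t in Ioc 0 (n : ℝ), F t) atTop (𝓝 (∫⁻ t in Ioi 0, F t)) := by
  have hunion : ⋃ n : ℕ, Ioc (0 : ℝ) n = Ioi 0 :=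
    iUnion_Ioc_eq_Ioi_self_iff.2 fun t _ => exists_nat_ge t
  have := tendsto_measure_iUnion_atTop (μ := volume.withDensity F)
    (s := fun n : ℕ => Ioc (0 : ℝ) n) fun m n hmn => Ioc_subset_Ioc_right (by exact_mod_cast hmn)
  simp_rw [hunion, withDensity_apply _ measurableSet_Ioi] at this
  simpa only [Function.comp_def, withDensity_apply _ measurableSet_Ioc] using this

lemma mul_measure_rpow_le_lintegral_rpow {α : Type*} [MeasurableSpace α] {μ : Measure α}
    {F : α → ℝ≥0∞} {S : Set α} {A : ℝ≥0∞} {q : ℝ} (hq : 0 < q) (hS : MeasurableSet S)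
    (hA : ∀ z ∈ S, A ≤ F z) :
    A * μ S ^ (1 / q) ≤ (∫⁻ z, F z ^ q ∂μ) ^ (1 / q) := by
  have hpow : A ^ q * μ S ≤ ∫⁻ z, F z ^ q ∂μ :=
    calc A ^ q * μ S = ∫⁻ _ in S, A ^ q ∂μ := (setLIntegral_const S _).symm
      _ ≤ ∫⁻ z in S, F z ^ q ∂μ := setLIntegral_mono' hS fun z hz => rpow_le_rpow (hA z hz) hq.le
      _ ≤ _ := setLIntegral_le_lintegral _ _
  calc A * μ S ^ (1 / q) = (A ^ q * μ S) ^ (1 / q) := by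
        rw [mul_rpow_of_nonneg _ _ (by positivity), ← rpow_mul, mul_one_div_cancel hq.ne', rpow_one]
    _ ≤ _ := rpow_le_rpow hpow (by positivity)

lemma ENNReal.le_mul_rpow_of_mul_rpow_le {J m c : ℝ≥0∞} {a q : ℝ} (ha : a < 1) (hq : 0 < q)
    (hc : c ≠ 0) (hJ : J ≠ ⊤) (h : J * m ^ (1 / q) ≤ c * J ^ a) :
    m ≤ c ^ q * J ^ ((a - 1) * q) := by
  rcases eq_or_ne J 0 with rfl | hJ0
  · rw [zero_rpow_of_neg (by nlinarith), mul_top (by simp [rpow_eq_zero_iff, hc, hq.le])]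
    exact le_top
  have hroot : m ^ (1 / q) ≤ c * J ^ (a - 1) := by
    rw [rpow_sub _ _ hJ0 hJ, rpow_one, ← mul_div_assoc,
      ENNReal.le_div_iff_mul_le (.inl hJ0) (.inl hJ), mul_comm]
    exact h
  calc m = (m ^ (1 / q)) ^ q := by rw [← rpow_mul, one_div_mul_cancel hq.ne', rpow_one]
    _ ≤ (c * J ^ (a - 1)) ^ q := rpow_le_rpow hroot hq.le
    _ = c ^ q * J ^ ((a - 1) * q) := by rw [mul_rpow_of_nonneg _ _ hq.le, ← rpow_mul]

noncomputable def carlesonTestFunction (p r : ℝ) (w : ℝ → ℝ) (t : ℝ) : ℝ :=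
  Real.exp (-(r / (p - 1) * t)) * w t ^ (-(1 / (p - 1)))

section CarlesonTestFunction

variable {p r : ℝ} {w : ℝ → ℝ}

lemma carlesonTestFunction_mul_exp (hp : p ≠ 1) (t : ℝ) :
    carlesonTestFunction p r w t * Real.exp (-(r * t)) =
      Real.exp (-(r * (p / (p - 1)) * t)) * w t ^ (-(1 / (p - 1))) := by
  have hp1 : p - 1 ≠ 0 := sub_ne_zero.2 hp
  rw [carlesonTestFunction, mul_right_comm, ← Real.exp_add]
  congr 2
  field_simp
  ring

lemma carlesonTestFunction_rpow_mul (hp : p ≠ 1) {t : ℝ} (hw : 0 < w t) :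
    carlesonTestFunction p r w t ^ p * w t =
      Real.exp (-(r * (p / (p - 1)) * t)) * w t ^ (-(1 / (p - 1))) := by
  have hp1 : p - 1 ≠ 0 := sub_ne_zero.2 hp
  rw [carlesonTestFunction, Real.mul_rpow (Real.exp_pos _).le (Real.rpow_pos_of_pos hw _).le,
    ← Real.exp_mul, ← Real.rpow_mul hw.le, mul_assoc, ← Real.rpow_add_one hw.ne']
  congr 2
  · field_simp
  · field_simp
    ring

lemma measurable_carlesonTestFunction (hw : Measurable w) :
    Measurable (carlesonTestFunction p r w) := by
  unfold carlesonTestFunction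
  fun_prop

lemma carlesonTestFunction_nonneg {t : ℝ} (hw : 0 ≤ w t) : 0 ≤ carlesonTestFunction p r w t :=
  mul_nonneg (Real.exp_pos _).le (Real.rpow_nonneg hw _)

end CarlesonTestFunction

lemma measure_image_Ioc_le_of_truncated_test {p q C r N : ℝ} {w : ℝ → ℝ} {μ : Measure ℂ}
    (hp : 1 < p) (hq : 0 < q) (hw : Measurable w) (hwpos : ∀ t > 0, 0 < w t) (hC : 0 < C)
    (hb : ∀ f : ℝ → ℂ, Measurable f →
      (∫⁻ z, (‖laplaceT f z‖₊ : ℝ≥0∞) ^ q ∂μ) ^ (1 / q) ≤ ENNReal.ofReal C * lpwNorm p w f)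
    (hJ : ∫⁻ t in Ioc 0 N,
      ENNReal.ofReal (Real.exp (-(r * (p / (p - 1)) * t)) * w t ^ (-(1 / (p - 1)))) ≠ ⊤) :
    μ (Complex.ofReal '' Ioc 0 r) ≤ ENNReal.ofReal (C ^ q) *
      (∫⁻ t in Ioc 0 N, ENNReal.ofReal
        (Real.exp (-(r * (p / (p - 1)) * t)) * w t ^ (-(1 / (p - 1))))) ^
          (-(q / (p / (p - 1)))) := by
  set g := carlesonTestFunction p r w
  set J := ∫⁻ t in Ioc 0 N,
    ENNReal.ofReal (Real.exp (-(r * (p / (p - 1)) * t)) * w t ^ (-(1 / (p - 1))))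
  have hs0 : Ioc 0 N ⊆ Ioi (0 : ℝ) := Ioc_subset_Ioi_self
  have hg : ∀ t ∈ Ioc 0 N, 0 ≤ g t := fun t ht => carlesonTestFunction_nonneg (hwpos t ht.1).le
  have hnorm : lpwNorm p w ((Ioc 0 N).indicator fun t => (g t : ℂ)) = J ^ (1 / p) := by
    rw [lpwNorm_indicator_ofReal measurableSet_Ioc hs0 (by linarith) w hg]
    congr 1
    exact setLIntegral_congr_fun measurableSet_Ioc fun t ht => by
      rw [carlesonTestFunction_rpow_mul hp.ne' (hwpos t ht.1)]
  have hJg : J = ∫⁻ t in Ioc 0 N, ENNReal.ofReal (g t * Real.exp (-(r * t))) :=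
    (lintegral_congr fun t => by rw [carlesonTestFunction_mul_exp hp.ne']).symm
  have hint : IntegrableOn (fun t => g t * Real.exp (-(r * t))) (Ioc 0 N) := by
    refine ⟨((measurable_carlesonTestFunction hw).mul (by fun_prop)).aestronglyMeasurable,
      (hasFiniteIntegral_iff_ofReal ?_).2 (hJg ▸ hJ.lt_top)⟩
    exact (ae_restrict_iff' measurableSet_Ioc).2
      (ae_of_all _ fun t ht => mul_nonneg (hg t ht) (Real.exp_pos _).le)
  have hlap : ∀ z ∈ Complex.ofReal '' Ioc 0 r,
      J ≤ (‖laplaceT ((Ioc 0 N).indicator fun t => (g t : ℂ)) z‖₊ : ℝ≥0∞) := by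
    rintro _ ⟨x, hx, rfl⟩
    rw [hJg, ← enorm_eq_nnnorm]
    exact lintegral_mul_exp_le_enorm_laplaceT measurableSet_Ioc hs0 hg hx.2
      (integrableOn_Ioc_mul_exp hint x)
  have hS : MeasurableSet (Complex.ofReal '' Ioc 0 r) :=
    Complex.isometry_ofReal.isClosedEmbedding.measurableEmbedding.measurableSet_image.2
      measurableSet_Ioc
  have hf : Measurable ((Ioc 0 N).indicator fun t => (g t : ℂ)) :=
    (measurable_carlesonTestFunction hw).complex_ofReal.indicator measurableSet_Ioc
  have htest := (mul_measure_rpow_le_lintegral_rpow hq hS hlap).trans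
    ((hb _ hf).trans_eq (by rw [hnorm]))
  rw [← ofReal_rpow_of_pos hC, show -(q / (p / (p - 1))) = (1 / p - 1) * q by field_simp; ring]
  exact ENNReal.le_mul_rpow_of_mul_rpow_le (by rw [div_lt_one] <;> linarith) hq
    (ofReal_pos.2 hC).ne' hJ htest

theorem interval_measure_bound_of_laplace_carleson_bounded_general
    (p q : ℝ) (hp : 1 < p) (hq : 1 ≤ q)
    (w : ℝ → ℝ) (hw : Measurable w) (hwpos : ∀ t > 0, 0 < w t)
    (μ : Measure ℂ)
    (hbdd : lcBounded p q w μ) :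
    ∃ C > 0, ∀ r > 0,
      (∫⁻ t in Set.Ioi (0:ℝ),
          ENNReal.ofReal (Real.exp (-(r * (p / (p - 1)) * t)) * (w t) ^ (-(1 / (p - 1))))) < ⊤ →
      μ (Complex.ofReal '' Set.Ioc (0:ℝ) r) ≤
        ENNReal.ofReal C *
          (∫⁻ t in Set.Ioi (0:ℝ),
            ENNReal.ofReal (Real.exp (-(r * (p / (p - 1)) * t)) *
              (w t) ^ (-(1 / (p - 1))))) ^ (-(q / (p / (p - 1)))) := by
  obtain ⟨C, hC, hb⟩ := hbdd
  refine ⟨C ^ q, by positivity, fun r _ hI => ?_⟩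
  have hJ := tendsto_setLIntegral_Ioc_natCast fun t =>
    ENNReal.ofReal (Real.exp (-(r * (p / (p - 1)) * t)) * w t ^ (-(1 / (p - 1))))
  refine ge_of_tendsto' (ENNReal.Tendsto.const_mul
    ((ENNReal.continuous_rpow_const.tendsto _).comp hJ) (.inr ofReal_ne_top)) fun n => ?_
  exact measure_image_Ioc_le_of_truncated_test hp (by linarith) hw hwpos hC hb
    (ne_top_of_le_ne_top hI.ne (lintegral_mono_set Ioc_subset_Ioi_self))

/-- if `μ` is supported on `(0,∞)` and the Laplace–Carleson embedding
`𝔏 : L^p_w(0,∞) → L^q(ℂ₊,μ)` is bounded, then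
`μ((0,r]) ≤ C (∫₀^∞ e^{-r p' t} w(t)^{-1/(p-1)} dt)^{-q/p'}` whenever the
integral is finite. -/
theorem interval_measure_bound_of_laplace_carleson_bounded
    (p q : ℝ) (hp : 1 < p) (hq : 1 ≤ q)
    (w : ℝ → ℝ) (hw : Measurable w) (hwpos : ∀ t > 0, 0 < w t)
    (μ : Measure ℂ) (hsupp : μ ((Complex.ofReal '' Set.Ioi (0:ℝ))ᶜ) = 0)
    (hbdd : lcBounded p q w μ) :
    ∃ C > 0, ∀ r > 0,
      (∫⁻ t in Set.Ioi (0:ℝ),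
          ENNReal.ofReal (Real.exp (-(r * (p / (p - 1)) * t)) * (w t) ^ (-(1 / (p - 1))))) < ⊤ →
      μ (Complex.ofReal '' Set.Ioc (0:ℝ) r) ≤
        ENNReal.ofReal C *
          (∫⁻ t in Set.Ioi (0:ℝ),
            ENNReal.ofReal (Real.exp (-(r * (p / (p - 1)) * t)) *
              (w t) ^ (-(1 / (p - 1))))) ^ (-(q / (p / (p - 1)))) :=
  interval_measure_bound_of_laplace_carleson_bounded_general p q hp hq w hw hwpos μ hbdd
end

section
/- Let 1 ≤ p < ∞, let w be a measurable weight on (0,∞), let f ∈ L^p_w(0,∞), and let x > 0. Let (t_k)_{k∈ℤ} be a nondecreasing sequence of nonnegative reals with t₀ = 1, inf_{k} t_k = 0 and sup_k t_k = ∞, and for each k ∈ ℤ let t*_k > 0 be such that e^{−t*_k} / w(t*_k x)^{1/p} ≥ e^{−t} / w(t x)^{1/p} for all t ∈ (t_k, t_{k+1}). Define g(t) := w(t)^{1/p} f(t) for t > 0 and g(t) := 0 for t ≤ 0, let Mg(x) := sup_{r>0} (1/(2r)) ∫_{|y|≤r} |g(x−y)| dy be the Hardy–Littlewood maximal function of g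 at x, and set Θ := 2 [ Σ_{k=−∞}^{−1} e^{−t*_k} w(t*_k x)^{−1/p} (1 − t_k) + Σ_{k=0}^{∞} e^{−t*_k} w(t*_k x)^{−1/p} (t_{k+1} − 1) ]. Then ∫₀^∞ e^{−t/x} |f(t)| dt ≤ Θ · x · Mg(x). -/
/-!
Split `(0,∞)` into the pieces `(x t_k, x t_{k+1}]`. On the `k`-th piece the choice of `t*_k`
gives `e^{-s/x} |f(s)| ≤ e^{-t*_k} w(t*_k x)^{-1/p} |g(s)|`, and the piece lies in the interval
centred at `x` of radius `x (t_{k+1} - 1)` (for `k ≥ 0`) or `x (1 - t_k)` (for `k < 0`), because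
`t_0 = 1`. The integral of `|g|` over that interval is at most `2 · radius · Mg(x)`; summing over
`k` gives the bound.
-/

open MeasureTheory Set Complex Filter ENNReal

theorem Monotone.exists_mem_Ioc_add_one {α : Type*} [LinearOrder α] {a : ℤ → α}
    (ha : Monotone a) {s : α} {k j : ℤ} (hk : a k < s) (hj : s ≤ a j) :
    ∃ i, s ∈ Ioc (a i) (a (i + 1)) := by
  have hs : s ∈ ⋃ i ∈ Ico k j, Ioc (a i) (a (Order.succ i)) := by
    rw [ha.biUnion_Ico_Ioc_map_succ]
    exact ⟨hk, hj⟩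
  simp only [mem_iUnion, Order.succ_eq_add_one] at hs
  obtain ⟨i, -, hi⟩ := hs
  exact ⟨i, hi⟩

theorem Ioi_zero_subset_iUnion_Ioc_mul {t : ℤ → ℝ} (ht : Monotone t)
    (htinf : ∀ ε > 0, ∃ k, t k < ε) (htsup : ∀ M : ℝ, ∃ k, M < t k) {x : ℝ} (hx : 0 < x) :
    Ioi (0 : ℝ) ⊆ ⋃ k : ℤ, Ioc (x * t k) (x * t (k + 1)) := by
  intro s hs
  obtain ⟨k, hk⟩ := htinf (s / x) (div_pos hs hx)
  obtain ⟨j, hj⟩ := htsup (s / x)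
  have hxt : Monotone fun k => x * t k := fun _ _ hab =>
    mul_le_mul_of_nonneg_left (ht hab) hx.le
  simpa only [mem_iUnion] using
    hxt.exists_mem_Ioc_add_one ((lt_div_iff₀' hx).1 hk) ((div_lt_iff₀' hx).1 hj).le

def partitionRadius (t : ℤ → ℝ) (k : ℤ) : ℝ :=
  if 0 ≤ k then t (k + 1) - 1 else 1 - t k

theorem partitionRadius_nonneg {t : ℤ → ℝ} (ht : Monotone t) (ht0 : t 0 = 1) (k : ℤ) :
    0 ≤ partitionRadius t k := by
  unfold partitionRadius
  split_ifs with hk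
  · linarith [ht (show (0 : ℤ) ≤ k + 1 by omega)]
  · linarith [ht (show k ≤ 0 by omega)]

theorem Icc_mul_subset_Icc_partitionRadius {t : ℤ → ℝ} (ht : Monotone t) (ht0 : t 0 = 1)
    {x : ℝ} (hx : 0 ≤ x) (k : ℤ) :
    Icc (x * t k) (x * t (k + 1)) ⊆
      Icc (x - x * partitionRadius t k) (x + x * partitionRadius t k) := by
  rintro s ⟨hks, hsk⟩
  have hk : t k ≤ t (k + 1) := ht (by omega)
  unfold partitionRadius
  split_ifs with h0
  · have h1 : 1 ≤ t k := ht0 ▸ ht h0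
    constructor <;> nlinarith [mul_le_mul_of_nonneg_left (h1.trans hk) hx]
  · have h1 : t (k + 1) ≤ 1 := ht0 ▸ ht (show k + 1 ≤ 0 by omega)
    constructor <;> nlinarith [mul_le_mul_of_nonneg_left (hk.trans h1) hx]

noncomputable def hardyLittlewoodMaximal (g : ℝ → ℂ) (x : ℝ) : ℝ≥0∞ :=
  ⨆ (r : ℝ) (_ : 0 < r),
    (ENNReal.ofReal (2 * r))⁻¹ * ∫⁻ y in Icc (-r) r, (‖g (x - y)‖₊ : ℝ≥0∞)

theorem lintegral_Icc_le_mul_hardyLittlewoodMaximal (g : ℝ → ℂ) (x : ℝ) {r : ℝ}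
    (hr : 0 ≤ r) :
    ∫⁻ s in Icc (x - r) (x + r), (‖g s‖₊ : ℝ≥0∞) ≤
      ENNReal.ofReal (2 * r) * hardyLittlewoodMaximal g x := by
  rcases hr.eq_or_lt with rfl | hr
  · simp
  have hshift : ∫⁻ s in Icc (x - r) (x + r), (‖g s‖₊ : ℝ≥0∞)
      = ∫⁻ y in Icc (-r) r, (‖g (x - y)‖₊ : ℝ≥0∞) := by
    rw [← (Measure.measurePreserving_sub_left volume x).setLIntegral_comp_preimage_emb
      (MeasurableEquiv.subLeft x).measurableEmbedding, preimage_const_sub_Icc,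
      sub_add_cancel_left, sub_sub_self]
  rw [hshift, ← ENNReal.inv_mul_le_iff (by positivity) ofReal_ne_top]
  exact le_iSup₂ (f := fun (r : ℝ) (_ : 0 < r) =>
    (ENNReal.ofReal (2 * r))⁻¹ * ∫⁻ y in Icc (-r) r, (‖g (x - y)‖₊ : ℝ≥0∞)) r hr

theorem lintegral_Ioc_le_partitionRadius_mul_hardyLittlewoodMaximal {t : ℤ → ℝ}
    (ht : Monotone t) (ht0 : t 0 = 1) {x : ℝ} (hx : 0 ≤ x) (g : ℝ → ℂ) (k : ℤ) :
    ∫⁻ s in Ioc (x * t k) (x * t (k + 1)), (‖g s‖₊ : ℝ≥0∞) ≤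
      ENNReal.ofReal (partitionRadius t k) *
        (2 * ENNReal.ofReal x * hardyLittlewoodMaximal g x) :=
  calc _ ≤ ∫⁻ s in Icc (x - x * partitionRadius t k) (x + x * partitionRadius t k),
        (‖g s‖₊ : ℝ≥0∞) :=
        lintegral_mono_set <|
          Ioc_subset_Icc_self.trans (Icc_mul_subset_Icc_partitionRadius ht ht0 hx k)
    _ ≤ ENNReal.ofReal (2 * (x * partitionRadius t k)) * hardyLittlewoodMaximal g x :=
        lintegral_Icc_le_mul_hardyLittlewoodMaximal g x
          (mul_nonneg hx (partitionRadius_nonneg ht ht0 k))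
    _ = _ := by
        rw [ENNReal.ofReal_mul zero_le_two, ENNReal.ofReal_mul hx, ENNReal.ofReal_ofNat]
        ring

theorem mul_le_mul_rpow_of_mul_rpow_neg_le {e W u C q : ℝ} (hW : 0 < W) (hu : 0 ≤ u)
    (h : e * W ^ (-q) ≤ C) : e * u ≤ C * (W ^ q * u) :=
  calc e * u = e * W ^ (-q) * (W ^ q * u) := by
        rw [mul_assoc, ← mul_assoc (W ^ (-q)), ← Real.rpow_add hW, neg_add_cancel,
          Real.rpow_zero, one_mul]
    _ ≤ C * (W ^ q * u) := mul_le_mul_of_nonneg_right h (by positivity)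

theorem setLIntegral_Ioc_exp_mul_le {p x C a b : ℝ} {w : ℝ → ℝ} {f g : ℝ → ℂ}
    (hx : 0 < x) (ha : 0 ≤ a) (hw : ∀ s > 0, 0 < w s)
    (hg : ∀ s > 0, ‖g s‖ = w s ^ (1 / p) * ‖f s‖)
    (hC : ∀ s ∈ Ioo a b, Real.exp (-s) * w (s * x) ^ (-(1 / p)) ≤ C) :
    ∫⁻ s in Ioc (x * a) (x * b), ENNReal.ofReal (Real.exp (-(s / x))) * (‖f s‖₊ : ℝ≥0∞) ≤
      ENNReal.ofReal C * ∫⁻ s in Ioc (x * a) (x * b), (‖g s‖₊ : ℝ≥0∞) := by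
  rw [← setLIntegral_congr Ioo_ae_eq_Ioc, ← setLIntegral_congr Ioo_ae_eq_Ioc,
    ← lintegral_const_mul' _ _ ofReal_ne_top]
  refine setLIntegral_mono' measurableSet_Ioo fun s hs => ?_
  have hs0 : 0 < s := (mul_nonneg hx.le ha).trans_lt hs.1
  have hsx : s / x ∈ Ioo a b := ⟨(lt_div_iff₀' hx).2 hs.1, (div_lt_iff₀' hx).2 hs.2⟩
  have hreal : Real.exp (-(s / x)) * ‖f s‖ ≤ C * ‖g s‖ := by
    rw [hg s hs0]
    refine mul_le_mul_rpow_of_mul_rpow_neg_le (hw s hs0) (norm_nonneg _) ?_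
    simpa only [div_mul_cancel₀ _ hx.ne'] using hC _ hsx
  calc ENNReal.ofReal (Real.exp (-(s / x))) * (‖f s‖₊ : ℝ≥0∞)
      = ENNReal.ofReal (Real.exp (-(s / x)) * ‖f s‖) := by
        rw [ENNReal.ofReal_mul (Real.exp_nonneg _), ofReal_norm, enorm_eq_nnnorm]
    _ ≤ ENNReal.ofReal (C * ‖g s‖) := ENNReal.ofReal_le_ofReal hreal
    _ = ENNReal.ofReal C * (‖g s‖₊ : ℝ≥0∞) := by
        rw [ENNReal.ofReal_mul' (norm_nonneg _), ofReal_norm, enorm_eq_nnnorm]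

theorem lintegral_exp_mul_le_maximal_general
    (p : ℝ)
    (w : ℝ → ℝ) (hwpos : ∀ s > 0, 0 < w s)
    (f : ℝ → ℂ)
    (x : ℝ) (hx : 0 < x)
    (t : ℤ → ℝ) (htmono : Monotone t) (htnn : ∀ k, 0 ≤ t k) (ht0 : t 0 = 1)
    (htinf : ∀ ε > 0, ∃ k, t k < ε) (htsup : ∀ M : ℝ, ∃ k, M < t k)
    (ts : ℤ → ℝ)
    (htsmax : ∀ k : ℤ, ∀ s ∈ Set.Ioo (t k) (t (k + 1)),
      Real.exp (-s) * (w (s * x)) ^ (-(1/p)) ≤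
        Real.exp (-(ts k)) * (w (ts k * x)) ^ (-(1/p)))
    (g : ℝ → ℂ)
    (hg : ∀ s : ℝ, g s = if 0 < s then (((w s) ^ (1/p) : ℝ) : ℂ) * f s else 0) :
    ∫⁻ s in Set.Ioi (0:ℝ), ENNReal.ofReal (Real.exp (-(s / x))) * (‖f s‖₊ : ℝ≥0∞) ≤
      (2 * ((∑' k : ℕ, ENNReal.ofReal
              (Real.exp (-(ts (-(k + 1 : ℤ)))) *
                (w (ts (-(k + 1 : ℤ)) * x)) ^ (-(1/p)) * (1 - t (-(k + 1 : ℤ))))) +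
            ∑' k : ℕ, ENNReal.ofReal
              (Real.exp (-(ts (k : ℤ))) *
                (w (ts (k : ℤ) * x)) ^ (-(1/p)) * (t ((k : ℤ) + 1) - 1)))) *
        ENNReal.ofReal x *
        ⨆ (r : ℝ) (_ : 0 < r),
          (ENNReal.ofReal (2 * r))⁻¹ * ∫⁻ y in Set.Icc (-r) r, (‖g (x - y)‖₊ : ℝ≥0∞) := by
  set c : ℤ → ℝ := fun k => Real.exp (-(ts k)) * w (ts k * x) ^ (-(1 / p))
  set M := hardyLittlewoodMaximal g x
  have hg' : ∀ s > 0, ‖g s‖ = w s ^ (1 / p) * ‖f s‖ := fun s hs => by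
    rw [hg s, if_pos hs, norm_mul, Complex.norm_real,
      Real.norm_of_nonneg (Real.rpow_nonneg (hwpos s hs).le _)]
  have hpiece : ∀ k, ∫⁻ s in Ioc (x * t k) (x * t (k + 1)),
      ENNReal.ofReal (Real.exp (-(s / x))) * (‖f s‖₊ : ℝ≥0∞) ≤
        ENNReal.ofReal (c k * partitionRadius t k) * (2 * ENNReal.ofReal x * M) := fun k =>
    calc _ ≤ ENNReal.ofReal (c k) * ∫⁻ s in Ioc (x * t k) (x * t (k + 1)), (‖g s‖₊ : ℝ≥0∞) :=
          setLIntegral_Ioc_exp_mul_le hx (htnn k) hwpos hg' (htsmax k)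
      _ ≤ ENNReal.ofReal (c k) *
            (ENNReal.ofReal (partitionRadius t k) * (2 * ENNReal.ofReal x * M)) :=
          mul_le_mul_right
            (lintegral_Ioc_le_partitionRadius_mul_hardyLittlewoodMaximal htmono ht0 hx.le g k) _
      _ = _ := by rw [ENNReal.ofReal_mul' (partitionRadius_nonneg htmono ht0 k), ← mul_assoc]
  calc _ ≤ ∑' k : ℤ, ∫⁻ s in Ioc (x * t k) (x * t (k + 1)),
          ENNReal.ofReal (Real.exp (-(s / x))) * (‖f s‖₊ : ℝ≥0∞) :=
        (lintegral_mono_set (Ioi_zero_subset_iUnion_Ioc_mul htmono htinf htsup hx)).trans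
          (lintegral_iUnion_le _ _)
    _ ≤ ∑' k : ℤ, ENNReal.ofReal (c k * partitionRadius t k) * (2 * ENNReal.ofReal x * M) :=
        ENNReal.tsum_le_tsum hpiece
    _ = _ := by
        rw [ENNReal.tsum_mul_right, tsum_of_nat_of_neg_add_one ENNReal.summable ENNReal.summable]
        simp only [partitionRadius, c, M, hardyLittlewoodMaximal, Int.natCast_nonneg, if_true,
          show ∀ n : ℕ, ¬ (0 : ℤ) ≤ -((n : ℤ) + 1) by omega, if_false]
        ring

/-- the maximal-function estimate
`∫₀^∞ e^{-t/x} |f(t)| dt ≤ Θ(P,w,x) · x · Mg(x)`, where `g = w^{1/p} f` (extended by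
`0` to `t ≤ 0`), `Mg` is the Hardy–Littlewood maximal function, and `Θ` is the sum
associated to the partition `(t_k)_{k∈ℤ}` and the points `(t*_k)`. -/
theorem lintegral_exp_mul_le_maximal
    (p : ℝ) (hp : 1 ≤ p)
    (w : ℝ → ℝ) (hw : Measurable w) (hwpos : ∀ s > 0, 0 < w s)
    (f : ℝ → ℂ) (hf : Measurable f) (hfLp : lpwNorm p w f < ⊤)
    (x : ℝ) (hx : 0 < x)
    (t : ℤ → ℝ) (htmono : Monotone t) (htnn : ∀ k, 0 ≤ t k) (ht0 : t 0 = 1)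
    (htinf : ∀ ε > 0, ∃ k, t k < ε) (htsup : ∀ M : ℝ, ∃ k, M < t k)
    (ts : ℤ → ℝ) (hts : ∀ k, 0 < ts k)
    (htsmax : ∀ k : ℤ, ∀ s ∈ Set.Ioo (t k) (t (k + 1)),
      Real.exp (-s) * (w (s * x)) ^ (-(1/p)) ≤
        Real.exp (-(ts k)) * (w (ts k * x)) ^ (-(1/p)))
    (g : ℝ → ℂ)
    (hg : ∀ s : ℝ, g s = if 0 < s then (((w s) ^ (1/p) : ℝ) : ℂ) * f s else 0) :
    ∫⁻ s in Set.Ioi (0:ℝ), ENNReal.ofReal (Real.exp (-(s / x))) * (‖f s‖₊ : ℝ≥0∞) ≤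
      (2 * ((∑' k : ℕ, ENNReal.ofReal
              (Real.exp (-(ts (-(k + 1 : ℤ)))) *
                (w (ts (-(k + 1 : ℤ)) * x)) ^ (-(1/p)) * (1 - t (-(k + 1 : ℤ))))) +
            ∑' k : ℕ, ENNReal.ofReal
              (Real.exp (-(ts (k : ℤ))) *
                (w (ts (k : ℤ) * x)) ^ (-(1/p)) * (t ((k : ℤ) + 1) - 1)))) *
        ENNReal.ofReal x *
        ⨆ (r : ℝ) (_ : 0 < r),
          (ENNReal.ofReal (2 * r))⁻¹ * ∫⁻ y in Set.Icc (-r) r, (‖g (x - y)‖₊ : ℝ≥0∞) :=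
  lintegral_exp_mul_le_maximal_general p w hwpos f x hx t htmono htnn ht0 htinf htsup ts htsmax g hg
end

section
/- Let 1 < p ≤ q < ∞ and α < p − 1. Let (λ_k)_{k∈ℕ} be a sequence in the open left half-plane and (b_k)_{k∈ℕ} a sequence of complex numbers, and suppose there exists 0 < θ < π/2 such that −λ_k ∈ S(θ) (equivalently |Im(−λ_k)| < Re(−λ_k) tan θ) for all k ∈ ℕ. Let μ := Σ_{k=1}^∞ |b_k|^q δ_{−λ_k}. Then the Laplace–Carleson embedding 𝔏 : L^p_{t^α}(0,∞) → L^q(ℂ₊, μ) is bounded (equivalently, the control operator with coefficients (b_k) is L^p_{t^α}-admissible for the diagonal semigroup with eigenvalues (λ_k)) if and only if there exists a constant C > 0 such that for every nonempty subset Γ ⊆ ℕ, Σ_{k∈Γ} |b_k|^q ≤ C · sup_{k∈Γ} (Re(−λ_k))^{(q/p′)(1 − α/(p−1))}. -/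
open MeasureTheory Set Complex Filter ENNReal

/-- The sector `S(θ) = {z ∈ ℂ₊ : |arg z| < θ}`. -/
def sector (θ : ℝ) : Set ℂ := {z : ℂ | 0 < z.re ∧ |Complex.arg z| < θ}

/-- The truncated sector `Δ_r = {z ∈ S(θ) : Re z ≤ r}`. -/
def sectorDelta (θ r : ℝ) : Set ℂ := {z ∈ sector θ | z.re ≤ r}


/-!
Both directions go through the strip condition `μ {z | Re z ≤ s} ≤ C s^β`, `β = q (p - 1 - α) / p`,
which for `μ = Σ |b_k|^q δ_{-λ_k}` is the stated condition on the sets `Γ`.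

Sufficiency: if `2^n ≤ Re z`, split `(0, ∞)` into the dyadic intervals `[2^j, 2^{j+1})`. Hölder
on each of them gives `|𝔏f(z)| ≲ 2^{-nγ} Σ_j a_{n+j} v_j^{1/p}`, where `γ = β / q`,
`a_i = (2^i)^γ e^{-2^i}` is summable over `ℤ` and `v_j` is the part of `‖f‖^p` on the `j`-th
interval. Jensen's inequality for the weights `a`, the strip condition on each dyadic strip and
`Σ v_j^{q/p} ≤ (Σ v_j)^{q/p}` (this is where `p ≤ q` enters) bound `∫ |𝔏f|^q dμ` by `‖f‖^q`.

Necessity: for `a ≍ 1/s` the test function `1_{[a, 2a)}` has norm `≲ a^{(α+1)/p}`, while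
`Re 𝔏1_{[a,2a)}(z) ≥ a/2` whenever `8 a |z| ≤ 1`, which in the sector holds on `{Re z ≤ s}`.
-/

namespace ENNReal

variable {ι : Type*} {p : ℝ}

theorem inner_le_weight_mul_Lp_tsum (hp : 1 ≤ p) (w f : ι → ℝ≥0∞) :
    ∑' i, w i * f i ≤ (∑' i, w i) ^ (1 - p⁻¹) * (∑' i, w i * f i ^ p) ^ p⁻¹ := by
  have h₀ : 0 ≤ 1 - p⁻¹ := sub_nonneg.2 (inv_le_one_of_one_le₀ hp)
  rw [ENNReal.tsum_eq_iSup_sum]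
  refine iSup_le fun s => (inner_le_weight_mul_Lp_of_nonneg s hp w f).trans ?_
  gcongr <;> exact ENNReal.sum_le_tsum s

theorem rpow_tsum_mul_le (hp : 1 ≤ p) (w f : ι → ℝ≥0∞) :
    (∑' i, w i * f i) ^ p ≤ (∑' i, w i) ^ (p - 1) * ∑' i, w i * f i ^ p := by
  have hp₀ : 0 < p := by linarith
  calc (∑' i, w i * f i) ^ p
      ≤ ((∑' i, w i) ^ (1 - p⁻¹) * (∑' i, w i * f i ^ p) ^ p⁻¹) ^ p := by
        gcongr; exact inner_le_weight_mul_Lp_tsum hp w f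
    _ = (∑' i, w i) ^ (p - 1) * ∑' i, w i * f i ^ p := by
        rw [ENNReal.mul_rpow_of_nonneg _ _ hp₀.le, ← ENNReal.rpow_mul, ← ENNReal.rpow_mul,
          inv_mul_cancel₀ hp₀.ne', ENNReal.rpow_one, sub_mul, one_mul, inv_mul_cancel₀ hp₀.ne']

theorem tsum_rpow_le_rpow_tsum (hp : 1 ≤ p) (f : ι → ℝ≥0∞) :
    ∑' i, f i ^ p ≤ (∑' i, f i) ^ p := by
  have split : ∀ x : ℝ≥0∞, x ^ p = x ^ (p - 1) * x ^ (1 : ℝ) := fun x => by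
    rw [← ENNReal.rpow_add_of_nonneg _ _ (by linarith) zero_le_one, sub_add_cancel]
  calc ∑' i, f i ^ p = ∑' i, f i ^ (p - 1) * f i ^ (1 : ℝ) := by simp_rw [← split]
    _ ≤ ∑' i, (∑' j, f j) ^ (p - 1) * f i ^ (1 : ℝ) := by
        gcongr with i
        exact ENNReal.le_tsum i
    _ = (∑' i, f i) ^ p := by simp_rw [rpow_one, ENNReal.tsum_mul_left, split, rpow_one]

end ENNReal

theorem Ioi_zero_eq_iUnion_Ico_two_zpow :
    Ioi (0 : ℝ) = ⋃ j : ℤ, Ico (2 ^ j) (2 ^ (j + 1)) := by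
  ext t
  simp only [mem_Ioi, mem_iUnion, mem_Ico]
  refine ⟨fun ht => ⟨Int.log 2 t, ?_, ?_⟩, fun ⟨j, hj, _⟩ => (zpow_pos two_pos j).trans_le hj⟩
  · exact_mod_cast Int.zpow_log_le_self one_lt_two ht
  · exact_mod_cast Int.lt_zpow_succ_log_self one_lt_two t

theorem pairwise_disjoint_Ico_two_zpow :
    Pairwise (Function.onFun Disjoint fun j : ℤ => Ico ((2 : ℝ) ^ j) (2 ^ (j + 1))) := by
  refine (pairwise_disjoint_on _).2 fun i j hij => ?_
  refine Set.disjoint_left.2 fun t hi hj => (hi.2.trans_le ?_).not_ge hj.1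
  exact zpow_le_zpow_right₀ one_le_two (by omega)

theorem lintegral_Ioi_zero_eq_tsum_Ico (g : ℝ → ℝ≥0∞) :
    ∫⁻ t in Ioi 0, g t = ∑' j : ℤ, ∫⁻ t in Ico (2 ^ j) (2 ^ (j + 1)), g t := by
  rw [Ioi_zero_eq_iUnion_Ico_two_zpow,
    lintegral_iUnion (fun _ => measurableSet_Ico) pairwise_disjoint_Ico_two_zpow]

theorem rpow_le_two_rpow_abs_mul {x t : ℝ} (hx : 0 < x) (ht : t ∈ Ico x (2 * x)) (δ : ℝ) :
    t ^ δ ≤ 2 ^ |δ| * x ^ δ := by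
  rcases le_or_gt 0 δ with hδ | hδ
  · calc t ^ δ ≤ (2 * x) ^ δ := Real.rpow_le_rpow (hx.le.trans ht.1) ht.2.le hδ
      _ = 2 ^ |δ| * x ^ δ := by rw [abs_of_nonneg hδ, Real.mul_rpow zero_le_two hx.le]
  · calc t ^ δ ≤ x ^ δ := Real.rpow_le_rpow_of_nonpos hx ht.1 hδ.le
      _ ≤ 2 ^ |δ| * x ^ δ :=
        le_mul_of_one_le_left (by positivity) (Real.one_le_rpow one_le_two (abs_nonneg δ))

theorem lintegral_Ico_rpow_le {x : ℝ} (hx : 0 < x) (δ : ℝ) :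
    ∫⁻ t in Ico x (2 * x), ENNReal.ofReal (t ^ δ) ≤ ENNReal.ofReal (2 ^ |δ| * x ^ (δ + 1)) := by
  calc ∫⁻ t in Ico x (2 * x), ENNReal.ofReal (t ^ δ)
      ≤ ∫⁻ _ in Ico x (2 * x), ENNReal.ofReal (2 ^ |δ| * x ^ δ) :=
        setLIntegral_mono' measurableSet_Ico fun t ht =>
          ENNReal.ofReal_le_ofReal (rpow_le_two_rpow_abs_mul hx ht δ)
    _ = ENNReal.ofReal (2 ^ |δ| * x ^ (δ + 1)) := by
        rw [setLIntegral_const, Real.volume_Ico, ← ENNReal.ofReal_mul (by positivity),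
          Real.rpow_add_one hx.ne']
        ring_nf

theorem lintegral_le_weighted_Lp_mul {X : Type*} [MeasurableSpace X] {μ : Measure X} {p q : ℝ}
    (hpq : p.HolderConjugate q) {f w : X → ℝ≥0∞} (hf : AEMeasurable f μ) (hw : AEMeasurable w μ)
    (hw₀ : ∀ᵐ x ∂μ, w x ≠ 0) (hw_top : ∀ᵐ x ∂μ, w x ≠ ∞) :
    ∫⁻ x, f x ∂μ ≤
      (∫⁻ x, f x ^ p * w x ∂μ) ^ (1 / p) * (∫⁻ x, w x ^ (-(q / p)) ∂μ) ^ (1 / q) := by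
  have hp := hpq.pos
  have key := ENNReal.lintegral_mul_le_Lp_mul_Lq μ hpq
    (hf.mul (hw.pow_const (1 / p))) (hw.pow_const (-(1 / p)))
  refine le_of_eq_of_le (lintegral_congr_ae ?_) (key.trans_eq ?_)
  · filter_upwards [hw₀, hw_top] with x h₀ h_top
    simp only [Pi.mul_apply]
    rw [mul_assoc, ← ENNReal.rpow_add _ _ h₀ h_top, add_neg_cancel, rpow_zero, mul_one]
  · congr 3 <;> funext x
    · rw [Pi.mul_apply, ENNReal.mul_rpow_of_nonneg _ _ hp.le, ← ENNReal.rpow_mul,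
        one_div_mul_cancel hp.ne', rpow_one]
    · rw [← ENNReal.rpow_mul]
      ring_nf

theorem lintegral_Ico_le {p α x : ℝ} (hp : 1 < p) {g : ℝ → ℝ≥0∞} (hg : Measurable g)
    (hx : 0 < x) :
    ∫⁻ t in Ico x (2 * x), g t ≤
      ENNReal.ofReal (2 ^ |α / (p - 1)|) ^ ((p - 1) / p) * ENNReal.ofReal (x ^ ((p - 1 - α) / p)) *
        (∫⁻ t in Ico x (2 * x), g t ^ p * ENNReal.ofReal (t ^ α)) ^ (1 / p) := by
  have hp₀ : 0 < p := by linarith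
  have hp₁ : p - 1 ≠ 0 := by linarith
  have hpos : ∀ t ∈ Ico x (2 * x), 0 < t := fun t ht => hx.trans_le ht.1
  have hw : Measurable fun t : ℝ => ENNReal.ofReal (t ^ α) :=
    (measurable_id.pow_const α).ennreal_ofReal
  have hconj : p.HolderConjugate (p / (p - 1)) := Real.HolderConjugate.conjExponent hp
  have holder := lintegral_le_weighted_Lp_mul (μ := volume.restrict (Ico x (2 * x)))
    hconj hg.aemeasurable hw.aemeasurable
    (ae_restrict_of_forall_mem measurableSet_Ico fun t ht => by
      simpa using Real.rpow_pos_of_pos (hpos t ht) α)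
    (ae_of_all _ fun _ => ENNReal.ofReal_ne_top)
  have weight : ∫⁻ t in Ico x (2 * x), ENNReal.ofReal (t ^ α) ^ (-(p / (p - 1) / p)) =
      ∫⁻ t in Ico x (2 * x), ENNReal.ofReal (t ^ (-(α / (p - 1)))) := by
    refine setLIntegral_congr_fun measurableSet_Ico fun t ht => ?_
    rw [ENNReal.ofReal_rpow_of_pos (Real.rpow_pos_of_pos (hpos t ht) α),
      ← Real.rpow_mul (hpos t ht).le]
    congr 2
    field_simp
  rw [weight] at holder
  refine holder.trans ?_
  rw [mul_comm]
  gcongr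
  calc (∫⁻ t in Ico x (2 * x), ENNReal.ofReal (t ^ (-(α / (p - 1))))) ^ (1 / (p / (p - 1)))
      ≤ ENNReal.ofReal (2 ^ |-(α / (p - 1))| * x ^ (-(α / (p - 1)) + 1)) ^ ((p - 1) / p) := by
        rw [one_div_div]
        gcongr
        exact lintegral_Ico_rpow_le hx _
    _ = _ := by
        rw [abs_neg, ENNReal.ofReal_mul (by positivity), ENNReal.mul_rpow_of_nonneg _ _
          (div_nonneg (by linarith) hp₀.le),
          ENNReal.ofReal_rpow_of_pos (x := x ^ _) (by positivity), ← Real.rpow_mul hx.le]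
        congr 3
        field_simp
        ring

theorem rpow_mul_exp_neg_le {x : ℝ} (hx : 0 < x) (γ : ℝ) (m : ℕ) :
    x ^ γ * Real.exp (-x) ≤ m.factorial * x ^ (γ - m) := by
  have hexp : x ^ m / m.factorial ≤ Real.exp x := Real.pow_div_factorial_le_exp x hx.le m
  calc x ^ γ * Real.exp (-x) = x ^ γ / Real.exp x := by rw [Real.exp_neg, div_eq_mul_inv]
    _ ≤ x ^ γ / (x ^ m / m.factorial) := by gcongr
    _ = m.factorial * x ^ (γ - m) := by
        rw [Real.rpow_sub hx, Real.rpow_natCast]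
        field_simp

theorem summable_two_zpow_rpow_mul_exp_neg {γ : ℝ} (hγ : 0 < γ) :
    Summable fun i : ℤ => ((2 : ℝ) ^ i) ^ γ * Real.exp (-2 ^ i) := by
  refine Summable.of_nat_of_neg ?_ ?_
  · obtain ⟨m, hm⟩ := exists_nat_gt γ
    refine Summable.of_nonneg_of_le (fun n => by positivity) (fun n => ?_)
      ((summable_geometric_of_lt_one (by positivity)
        (Real.rpow_lt_one_of_one_lt_of_neg one_lt_two (sub_neg.2 hm))).mul_left (m.factorial : ℝ))
    simp only [zpow_natCast]
    refine (rpow_mul_exp_neg_le (by positivity) γ m).trans_eq ?_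
    rw [Real.rpow_pow_comm zero_le_two]
  · refine Summable.of_nonneg_of_le (fun n => by positivity) (fun n => ?_)
      (summable_geometric_of_lt_one (by positivity)
        (inv_lt_one_of_one_lt₀ (Real.one_lt_rpow one_lt_two hγ)))
    calc ((2 : ℝ) ^ (-(n : ℤ))) ^ γ * Real.exp (-2 ^ (-(n : ℤ)))
        ≤ ((2 : ℝ) ^ (-(n : ℤ))) ^ γ :=
          mul_le_of_le_one_right (by positivity) (Real.exp_le_one_iff.2 (by simp))
      _ = ((2 : ℝ) ^ γ)⁻¹ ^ n := by
          rw [zpow_neg, zpow_natCast, Real.inv_rpow (by positivity), inv_pow,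
            Real.rpow_pow_comm zero_le_two]

noncomputable def dyadicWeight (γ : ℝ) (i : ℤ) : ℝ≥0∞ :=
  ENNReal.ofReal (((2 : ℝ) ^ i) ^ γ * Real.exp (-2 ^ i))

theorem tsum_dyadicWeight_ne_top {γ : ℝ} (hγ : 0 < γ) : ∑' i, dyadicWeight γ i ≠ ∞ := by
  unfold dyadicWeight
  rw [← ENNReal.ofReal_tsum_of_nonneg (fun i => by positivity)
    (summable_two_zpow_rpow_mul_exp_neg hγ)]
  exact ENNReal.ofReal_ne_top

theorem tsum_dyadicWeight_add_left (γ : ℝ) (n : ℤ) :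
    ∑' j, dyadicWeight γ (n + j) = ∑' i, dyadicWeight γ i :=
  (Equiv.addLeft n).tsum_eq (dyadicWeight γ)

noncomputable def dyadicPiece (p α : ℝ) (f : ℝ → ℂ) (j : ℤ) : ℝ≥0∞ :=
  ∫⁻ t in Ico (2 ^ j) (2 ^ (j + 1)), ‖f t‖ₑ ^ p * ENNReal.ofReal (t ^ α)

theorem tsum_dyadicPiece (p α : ℝ) (f : ℝ → ℂ) :
    ∑' j, dyadicPiece p α f j = ∫⁻ t in Ioi 0, ‖f t‖ₑ ^ p * ENNReal.ofReal (t ^ α) :=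
  (lintegral_Ioi_zero_eq_tsum_Ico _).symm

theorem enorm_laplaceT_le_tsum (f : ℝ → ℂ) {z : ℂ} {n : ℤ} (hn : 2 ^ n ≤ z.re) :
    ‖laplaceT f z‖ₑ ≤ ∑' j : ℤ,
      ENNReal.ofReal (Real.exp (-2 ^ (n + j))) * ∫⁻ t in Ico (2 ^ j) (2 ^ (j + 1)), ‖f t‖ₑ := by
  have decay : ∀ j : ℤ, ∀ t ∈ Ico ((2 : ℝ) ^ j) (2 ^ (j + 1)),
      ‖f t * Complex.exp (-(t : ℂ) * z)‖ₑ ≤ ‖f t‖ₑ * ENNReal.ofReal (Real.exp (-2 ^ (n + j))) := by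
    intro j t ht
    rw [enorm_mul, ← ofReal_norm (Complex.exp _), Complex.norm_exp]
    gcongr
    have : (2 : ℝ) ^ (n + j) ≤ z.re * t := by
      rw [zpow_add₀ two_ne_zero]
      exact mul_le_mul hn ht.1 (by positivity) ((zpow_pos two_pos n).le.trans hn)
    simp only [neg_mul, neg_re, mul_re, ofReal_re, ofReal_im, zero_mul, sub_zero]
    linarith
  calc ‖laplaceT f z‖ₑ ≤ ∫⁻ t in Ioi 0, ‖f t * Complex.exp (-(t : ℂ) * z)‖ₑ :=
        enorm_integral_le_lintegral_enorm _
    _ = ∑' j : ℤ, ∫⁻ t in Ico (2 ^ j) (2 ^ (j + 1)), ‖f t * Complex.exp (-(t : ℂ) * z)‖ₑ :=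
        lintegral_Ioi_zero_eq_tsum_Ico _
    _ ≤ ∑' j : ℤ, ∫⁻ t in Ico (2 ^ j) (2 ^ (j + 1)),
          ‖f t‖ₑ * ENNReal.ofReal (Real.exp (-2 ^ (n + j))) :=
        ENNReal.tsum_le_tsum fun j => setLIntegral_mono' measurableSet_Ico (decay j)
    _ = _ := by
        congr 1 with j
        rw [lintegral_mul_const' _ _ ENNReal.ofReal_ne_top, mul_comm]

theorem enorm_laplaceT_le {p α : ℝ} (hp : 1 < p) {f : ℝ → ℂ} (hf : Measurable f) {z : ℂ}
    {n : ℤ} (hn : 2 ^ n ≤ z.re) :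
    ‖laplaceT f z‖ₑ ≤ ENNReal.ofReal (2 ^ |α / (p - 1)|) ^ ((p - 1) / p) *
      ENNReal.ofReal (((2 : ℝ) ^ n) ^ (-((p - 1 - α) / p))) *
        ∑' j, dyadicWeight ((p - 1 - α) / p) (n + j) * dyadicPiece p α f j ^ (1 / p) := by
  set γ := (p - 1 - α) / p
  have rescale : ∀ j : ℤ, ENNReal.ofReal (Real.exp (-2 ^ (n + j))) *
      ENNReal.ofReal (((2 : ℝ) ^ j) ^ γ) =
        ENNReal.ofReal (((2 : ℝ) ^ n) ^ (-γ)) * dyadicWeight γ (n + j) := by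
    intro j
    rw [dyadicWeight, ← ENNReal.ofReal_mul (by positivity), ← ENNReal.ofReal_mul (by positivity),
      zpow_add₀ two_ne_zero, Real.mul_rpow (by positivity) (by positivity), Real.rpow_neg
        (by positivity)]
    field_simp
  refine (enorm_laplaceT_le_tsum f hn).trans ?_
  rw [← ENNReal.tsum_mul_left]
  refine ENNReal.tsum_le_tsum fun j => ?_
  have hj : (2 : ℝ) ^ (j + 1) = 2 * 2 ^ j := by rw [zpow_add_one₀ two_ne_zero, mul_comm]
  calc ENNReal.ofReal (Real.exp (-2 ^ (n + j))) * ∫⁻ t in Ico (2 ^ j) (2 ^ (j + 1)), ‖f t‖ₑ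
      ≤ ENNReal.ofReal (Real.exp (-2 ^ (n + j))) *
          (ENNReal.ofReal (2 ^ |α / (p - 1)|) ^ ((p - 1) / p) *
            ENNReal.ofReal (((2 : ℝ) ^ j) ^ γ) * dyadicPiece p α f j ^ (1 / p)) := by
        rw [dyadicPiece, hj]
        gcongr
        exact lintegral_Ico_le hp hf.enorm (zpow_pos two_pos j)
    _ = _ := by
        rw [mul_comm (ENNReal.ofReal _ ^ _), mul_assoc, ← mul_assoc, rescale]
        ring

theorem enorm_laplaceT_rpow_le {p q α : ℝ} (hp : 1 < p) (hq : 1 ≤ q) {f : ℝ → ℂ}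
    (hf : Measurable f) {z : ℂ} {n : ℤ} (hn : 2 ^ n ≤ z.re) :
    ‖laplaceT f z‖ₑ ^ q ≤ (ENNReal.ofReal (2 ^ |α / (p - 1)|) ^ ((p - 1) / p)) ^ q *
      (∑' i, dyadicWeight ((p - 1 - α) / p) i) ^ (q - 1) *
        ENNReal.ofReal (((2 : ℝ) ^ n) ^ (-(q * ((p - 1 - α) / p)))) *
          ∑' j, dyadicWeight ((p - 1 - α) / p) (n + j) * dyadicPiece p α f j ^ (q / p) := by
  set γ := (p - 1 - α) / p
  have hq₀ : 0 < q := by linarith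
  have jensen := ENNReal.rpow_tsum_mul_le hq (fun j => dyadicWeight γ (n + j))
    (fun j => dyadicPiece p α f j ^ (1 / p))
  simp only [tsum_dyadicWeight_add_left, ← ENNReal.rpow_mul, one_div_mul_eq_div] at jensen
  calc ‖laplaceT f z‖ₑ ^ q
      ≤ (ENNReal.ofReal (2 ^ |α / (p - 1)|) ^ ((p - 1) / p) *
          ENNReal.ofReal (((2 : ℝ) ^ n) ^ (-γ)) *
            ∑' j, dyadicWeight γ (n + j) * dyadicPiece p α f j ^ (1 / p)) ^ q := by
        gcongr
        exact enorm_laplaceT_le hp hf hn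
    _ ≤ (ENNReal.ofReal (2 ^ |α / (p - 1)|) ^ ((p - 1) / p)) ^ q *
          ENNReal.ofReal (((2 : ℝ) ^ n) ^ (-γ)) ^ q *
            ((∑' i, dyadicWeight γ i) ^ (q - 1) *
              ∑' j, dyadicWeight γ (n + j) * dyadicPiece p α f j ^ (q / p)) := by
        rw [ENNReal.mul_rpow_of_nonneg _ _ hq₀.le, ENNReal.mul_rpow_of_nonneg _ _ hq₀.le]
        gcongr
    _ = _ := by
        rw [ENNReal.ofReal_rpow_of_pos (x := ((2 : ℝ) ^ n) ^ (-γ)) (by positivity),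
          ← Real.rpow_mul (by positivity), neg_mul, mul_comm γ q]
        ring

theorem lintegral_enorm_laplaceT_rpow_le {p q α C : ℝ} (hp : 1 < p) (hpq : p ≤ q)
    {μ : Measure ℂ} (hμ : ∀ᵐ z ∂μ, 0 < z.re)
    (hC : ∀ s > 0, μ {z | z.re ≤ s} ≤ ENNReal.ofReal (C * s ^ (q * ((p - 1 - α) / p))))
    {f : ℝ → ℂ} (hf : Measurable f) :
    ∫⁻ z, ‖laplaceT f z‖ₑ ^ q ∂μ ≤ (ENNReal.ofReal (2 ^ |α / (p - 1)|) ^ ((p - 1) / p)) ^ q *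
      (∑' i, dyadicWeight ((p - 1 - α) / p) i) ^ (q - 1) *
        ENNReal.ofReal (C * 2 ^ (q * ((p - 1 - α) / p))) *
          (∑' i, dyadicWeight ((p - 1 - α) / p) i) *
            (∫⁻ t in Ioi 0, ‖f t‖ₑ ^ p * ENNReal.ofReal (t ^ α)) ^ (q / p) := by
  set γ := (p - 1 - α) / p
  set β := q * γ
  set S := ∑' i, dyadicWeight γ i
  set K := (ENNReal.ofReal (2 ^ |α / (p - 1)|) ^ ((p - 1) / p)) ^ q * S ^ (q - 1)
  set W := fun j => dyadicPiece p α f j ^ (q / p)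
  set c := fun m : ℤ =>
    K * ENNReal.ofReal (((2 : ℝ) ^ m) ^ (-β)) * ∑' j, dyadicWeight γ (m + j) * W j
  set strip := fun m : ℤ => {z : ℂ | z.re ∈ Ico ((2 : ℝ) ^ m) (2 ^ (m + 1))}
  have hstrip : ∀ m, MeasurableSet (strip m) := fun m => measurable_re measurableSet_Ico
  have pointwise : ∀ᵐ z ∂μ, ‖laplaceT f z‖ₑ ^ q ≤ ∑' m, (strip m).indicator (fun _ => c m) z := by
    filter_upwards [hμ] with z hz
    have hmem : z ∈ strip (Int.log 2 z.re) := by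
      constructor
      · exact_mod_cast Int.zpow_log_le_self one_lt_two hz
      · exact_mod_cast Int.lt_zpow_succ_log_self one_lt_two z.re
    calc ‖laplaceT f z‖ₑ ^ q ≤ c (Int.log 2 z.re) :=
          enorm_laplaceT_rpow_le hp (by linarith) hf hmem.1
      _ = (strip _).indicator (fun _ => c (Int.log 2 z.re)) z := by rw [indicator_of_mem hmem]
      _ ≤ _ := ENNReal.le_tsum (f := fun m => (strip m).indicator (fun _ => c m) z) _
  have per_strip : ∀ m, c m * μ (strip m) ≤
      K * ENNReal.ofReal (C * 2 ^ β) * ∑' j, dyadicWeight γ (m + j) * W j := by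
    intro m
    have hμm : μ (strip m) ≤ ENNReal.ofReal (C * ((2 : ℝ) ^ (m + 1)) ^ β) :=
      (measure_mono fun z hz => hz.2.le).trans (hC _ (zpow_pos two_pos _))
    have scale : ENNReal.ofReal (((2 : ℝ) ^ m) ^ (-β)) *
        ENNReal.ofReal (C * ((2 : ℝ) ^ (m + 1)) ^ β) = ENNReal.ofReal (C * 2 ^ β) := by
      rw [← ENNReal.ofReal_mul (by positivity), zpow_add_one₀ two_ne_zero,
        Real.mul_rpow (by positivity) zero_le_two, Real.rpow_neg (by positivity)]
      field_simp
    calc c m * μ (strip m) ≤ c m * ENNReal.ofReal (C * ((2 : ℝ) ^ (m + 1)) ^ β) := by gcongr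
      _ = _ := by
        simp only [c]
        rw [← scale]
        ring
  have sum_W : ∑' j, W j ≤ (∫⁻ t in Ioi 0, ‖f t‖ₑ ^ p * ENNReal.ofReal (t ^ α)) ^ (q / p) := by
    rw [← tsum_dyadicPiece]
    exact ENNReal.tsum_rpow_le_rpow_tsum ((one_le_div (by linarith)).2 hpq) _
  calc ∫⁻ z, ‖laplaceT f z‖ₑ ^ q ∂μ ≤ ∫⁻ z, ∑' m, (strip m).indicator (fun _ => c m) z ∂μ :=
        lintegral_mono_ae pointwise
    _ = ∑' m, c m * μ (strip m) := by
        rw [lintegral_tsum fun m => aemeasurable_const.indicator (hstrip m)]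
        simp_rw [lintegral_indicator_const (hstrip _)]
    _ ≤ ∑' m, K * ENNReal.ofReal (C * 2 ^ β) * ∑' j, dyadicWeight γ (m + j) * W j :=
        ENNReal.tsum_le_tsum per_strip
    _ = K * ENNReal.ofReal (C * 2 ^ β) * S * ∑' j, W j := by
        have shift : ∀ j, ∑' m, dyadicWeight γ (m + j) * W j = S * W j := fun j => by
          show _ = (∑' i, dyadicWeight γ i) * W j
          simp_rw [ENNReal.tsum_mul_right, add_comm _ j, tsum_dyadicWeight_add_left]
        rw [ENNReal.tsum_mul_left, ENNReal.tsum_comm, tsum_congr shift, ENNReal.tsum_mul_left]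
        ring
    _ ≤ _ := by gcongr

theorem lcBounded_iff {p q : ℝ} (hq : 0 < q) (w : ℝ → ℝ) (μ : Measure ℂ) :
    lcBounded p q w μ ↔ ∃ C > 0, ∀ f : ℝ → ℂ, Measurable f →
      ∫⁻ z, ‖laplaceT f z‖ₑ ^ q ∂μ ≤
        ENNReal.ofReal C * (∫⁻ t in Ioi 0, ‖f t‖ₑ ^ p * ENNReal.ofReal (w t)) ^ (q / p) := by
  have key : ∀ C > 0, ∀ X N : ℝ≥0∞,
      X ^ (1 / q) ≤ ENNReal.ofReal C * N ^ (1 / p) ↔ X ≤ ENNReal.ofReal (C ^ q) * N ^ (q / p) := by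
    intro C hC X N
    have scale : (ENNReal.ofReal C * N ^ (1 / p)) ^ q = ENNReal.ofReal (C ^ q) * N ^ (q / p) := by
      rw [ENNReal.mul_rpow_of_nonneg _ _ hq.le, ENNReal.ofReal_rpow_of_pos hC,
        ← ENNReal.rpow_mul, one_div_mul_eq_div]
    rw [← scale, one_div q, ENNReal.rpow_inv_le_iff hq]
  simp only [lcBounded, lpwNorm, ← enorm_eq_nnnorm]
  constructor
  · rintro ⟨C, hC, h⟩
    exact ⟨C ^ q, by positivity, fun f hf => (key C hC _ _).1 (h f hf)⟩
  · rintro ⟨C, hC, h⟩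
    refine ⟨C ^ (1 / q), by positivity, fun f hf => (key _ (by positivity) _ _).2 ?_⟩
    rw [← Real.rpow_mul hC.le, one_div_mul_cancel hq.ne', Real.rpow_one]
    exact h f hf

theorem lcBounded_of_measure_re_le {p q α C : ℝ} (hp : 1 < p) (hpq : p ≤ q) (hα : α < p - 1)
    {μ : Measure ℂ} (hμ : ∀ᵐ z ∂μ, 0 < z.re)
    (hC : ∀ s > 0, μ {z | z.re ≤ s} ≤ ENNReal.ofReal (C * s ^ (q * ((p - 1 - α) / p)))) :
    lcBounded p q (fun t => t ^ α) μ := by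
  have hS := tsum_dyadicWeight_ne_top
    (div_pos (by linarith : 0 < p - 1 - α) (by linarith : 0 < p))
  set E := (ENNReal.ofReal (2 ^ |α / (p - 1)|) ^ ((p - 1) / p)) ^ q *
    (∑' i, dyadicWeight ((p - 1 - α) / p) i) ^ (q - 1) *
      ENNReal.ofReal (C * 2 ^ (q * ((p - 1 - α) / p))) * (∑' i, dyadicWeight ((p - 1 - α) / p) i)
  have hE : E ≠ ∞ := by
    have : 0 ≤ q - 1 := by linarith
    finiteness
  refine (lcBounded_iff (by linarith) _ μ).2 ⟨E.toReal + 1, by positivity, fun f hf => ?_⟩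
  refine (lintegral_enorm_laplaceT_rpow_le hp hpq hμ hC hf).trans ?_
  gcongr
  exact (ENNReal.le_ofReal_iff_toReal_le hE (by positivity)).2 (by linarith)

theorem half_le_re_exp {w : ℂ} (hw : ‖w‖ ≤ 1 / 4) : 1 / 2 ≤ (Complex.exp w).re := by
  have hexp := Complex.norm_exp_sub_one_le (hw.trans (by norm_num))
  have hre := Complex.abs_re_le_norm (Complex.exp w - 1)
  rw [sub_re, one_re] at hre
  linarith [abs_le.1 hre]

theorem laplaceT_indicator_Ico {a : ℝ} (ha : 0 < a) (z : ℂ) :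
    laplaceT ((Ico a (2 * a)).indicator 1) z =
      ∫ t in Ico a (2 * a), Complex.exp (-(t : ℂ) * z) := by
  have hsub : Ico a (2 * a) ⊆ Ioi 0 := fun t ht => ha.trans_le ht.1
  have hmul : (fun t : ℝ => (Ico a (2 * a)).indicator 1 t * Complex.exp (-(t : ℂ) * z)) =
      (Ico a (2 * a)).indicator fun t => Complex.exp (-(t : ℂ) * z) := by
    ext t
    by_cases ht : t ∈ Ico a (2 * a) <;> simp [ht]
  rw [laplaceT, hmul, integral_indicator measurableSet_Ico,
    Measure.restrict_restrict measurableSet_Ico, inter_eq_left.2 hsub]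

theorem half_mul_le_norm_laplaceT_indicator {a : ℝ} (ha : 0 < a) {z : ℂ}
    (hz : 8 * a * ‖z‖ ≤ 1) :
    a / 2 ≤ ‖laplaceT ((Ico a (2 * a)).indicator 1) z‖ := by
  have hint : IntegrableOn (fun t : ℝ => Complex.exp (-(t : ℂ) * z)) (Ico a (2 * a)) :=
    (by fun_prop : Continuous fun t : ℝ => Complex.exp (-(t : ℂ) * z)).integrableOn_Icc.mono_set
      Ico_subset_Icc_self
  have near_one : ∀ t ∈ Ico a (2 * a), 1 / 2 ≤ (Complex.exp (-(t : ℂ) * z)).re := by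
    intro t ht
    refine half_le_re_exp ?_
    rw [norm_mul, norm_neg, Complex.norm_real, Real.norm_of_nonneg (ha.le.trans ht.1)]
    nlinarith [ht.2, norm_nonneg z]
  rw [laplaceT_indicator_Ico ha]
  calc a / 2 = 1 / 2 * volume.real (Ico a (2 * a)) := by
        rw [Real.volume_real_Ico, max_eq_left (by linarith)]
        ring
    _ ≤ ∫ t in Ico a (2 * a), (Complex.exp (-(t : ℂ) * z)).re :=
        setIntegral_ge_of_const_le_real measurableSet_Ico measure_Ico_lt_top.ne near_one hint.re
    _ = (∫ t in Ico a (2 * a), Complex.exp (-(t : ℂ) * z)).re := integral_re hint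
    _ ≤ _ := Complex.re_le_norm _

theorem lintegral_indicator_Ico_le {p : ℝ} (hp : 0 < p) {a : ℝ} (ha : 0 < a) (α : ℝ) :
    ∫⁻ t in Ioi 0, ‖(Ico a (2 * a)).indicator (1 : ℝ → ℂ) t‖ₑ ^ p * ENNReal.ofReal (t ^ α) ≤
      ENNReal.ofReal (2 ^ |α| * a ^ (α + 1)) := by
  have hpt : ∀ t, ‖(Ico a (2 * a)).indicator (1 : ℝ → ℂ) t‖ₑ ^ p * ENNReal.ofReal (t ^ α) =
      (Ico a (2 * a)).indicator (fun t => ENNReal.ofReal (t ^ α)) t := by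
    intro t
    by_cases ht : t ∈ Ico a (2 * a)
    · simp [ht]
    · simp [ht, ENNReal.zero_rpow_of_pos hp]
  simp_rw [hpt]
  calc _ ≤ ∫⁻ t, (Ico a (2 * a)).indicator (fun t => ENNReal.ofReal (t ^ α)) t :=
        setLIntegral_le_lintegral _ _
    _ = ∫⁻ t in Ico a (2 * a), ENNReal.ofReal (t ^ α) := lintegral_indicator measurableSet_Ico _
    _ ≤ _ := lintegral_Ico_rpow_le ha α

theorem rpow_half_mul_measure_re_le {p q α T C : ℝ} (hp : 0 < p) (hq : 0 < q) (hT : 0 ≤ T)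
    {μ : Measure ℂ} (hμ : ∀ᵐ z ∂μ, 0 < z.re ∧ |z.im| ≤ T * z.re)
    (hC : ∀ f : ℝ → ℂ, Measurable f → ∫⁻ z, ‖laplaceT f z‖ₑ ^ q ∂μ ≤
      ENNReal.ofReal C * (∫⁻ t in Ioi 0, ‖f t‖ₑ ^ p * ENNReal.ofReal (t ^ α)) ^ (q / p))
    {a s : ℝ} (ha : 0 < a) (has : 8 * a * ((1 + T) * s) ≤ 1) :
    ENNReal.ofReal (a / 2) ^ q * μ {z | z.re ≤ s} ≤
      ENNReal.ofReal C * ENNReal.ofReal (2 ^ |α| * a ^ (α + 1)) ^ (q / p) := by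
  set F : ℝ → ℂ := (Ico a (2 * a)).indicator 1
  have hF : Measurable F := measurable_const.indicator measurableSet_Ico
  have lower : ∀ᵐ z ∂μ, {z : ℂ | z.re ≤ s}.indicator (fun _ => ENNReal.ofReal (a / 2) ^ q) z ≤
      ‖laplaceT F z‖ₑ ^ q := by
    filter_upwards [hμ] with z ⟨hre, him⟩
    by_cases hzs : z.re ≤ s
    · rw [indicator_of_mem (show z ∈ {z : ℂ | z.re ≤ s} from hzs), ← ofReal_norm]
      gcongr
      refine half_mul_le_norm_laplaceT_indicator ha ?_
      have hz : ‖z‖ ≤ (1 + T) * s := by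
        nlinarith [Complex.norm_le_abs_re_add_abs_im z, abs_of_pos hre]
      nlinarith
    · rw [indicator_of_notMem (show z ∉ {z : ℂ | z.re ≤ s} from hzs)]
      exact zero_le
  calc ENNReal.ofReal (a / 2) ^ q * μ {z | z.re ≤ s}
      = ∫⁻ z, {z : ℂ | z.re ≤ s}.indicator (fun _ => ENNReal.ofReal (a / 2) ^ q) z ∂μ :=
        (lintegral_indicator_const (measurableSet_le measurable_re measurable_const) _).symm
    _ ≤ ∫⁻ z, ‖laplaceT F z‖ₑ ^ q ∂μ := lintegral_mono_ae lower
    _ ≤ _ := by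
        refine (hC F hF).trans ?_
        gcongr
        exact lintegral_indicator_Ico_le hp ha α

theorem measure_re_le_of_lcBounded {p q α T : ℝ} (hp : 0 < p) (hq : 0 < q) (hT : 0 ≤ T)
    {μ : Measure ℂ} (hμ : ∀ᵐ z ∂μ, 0 < z.re ∧ |z.im| ≤ T * z.re)
    (hL : lcBounded p q (fun t => t ^ α) μ) :
    ∃ C > 0, ∀ s > 0, μ {z | z.re ≤ s} ≤ ENNReal.ofReal (C * s ^ (q * ((p - 1 - α) / p))) := by
  obtain ⟨C, hC, hLC⟩ := (lcBounded_iff hq _ μ).1 hL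
  set β := q * ((p - 1 - α) / p)
  refine ⟨C * 2 ^ q * (2 ^ |α|) ^ (q / p) * (8 * (1 + T)) ^ β, by positivity, fun s hs => ?_⟩
  set a := (8 * (1 + T) * s)⁻¹
  have ha : 0 < a := by positivity
  have has : 8 * a * ((1 + T) * s) = 1 := by
    simp only [a]
    field_simp
  have key := rpow_half_mul_measure_re_le hp hq hT hμ hLC ha has.le
  have hs_a : (8 * (1 + T)) ^ β * s ^ β = a ^ (-β) := by
    simp only [a]
    rw [← Real.mul_rpow (by positivity) hs.le, Real.rpow_neg (by positivity),
      Real.inv_rpow (by positivity), inv_inv]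
  have scale : (a / 2) ^ q * (C * 2 ^ q * (2 ^ |α|) ^ (q / p) * (8 * (1 + T)) ^ β * s ^ β) =
      C * (2 ^ |α| * a ^ (α + 1)) ^ (q / p) := by
    have e : a ^ q * a ^ (-β) = a ^ ((α + 1) * (q / p)) := by
      rw [← Real.rpow_add ha]
      congr 1
      simp only [β]
      field_simp
      ring
    rw [mul_assoc _ ((8 * (1 + T)) ^ β), hs_a, Real.div_rpow ha.le zero_le_two,
      Real.mul_rpow (by positivity) (by positivity), ← Real.rpow_mul ha.le, ← e]
    field_simp
  rw [ENNReal.ofReal_rpow_of_pos (by positivity), ENNReal.ofReal_rpow_of_pos (by positivity),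
    ← ENNReal.ofReal_mul hC.le, ← scale, ENNReal.ofReal_mul (by positivity)] at key
  exact (ENNReal.mul_le_mul_iff_right (by positivity) ENNReal.ofReal_ne_top).1 key

namespace MeasureTheory.Measure

theorem sum_smul_dirac_apply {X ι : Type*} [MeasurableSpace X] (c : ι → ℝ≥0∞)
    (x : ι → X) {s : Set X} (hs : MeasurableSet s) :
    (Measure.sum fun i => c i • Measure.dirac (x i)) s = ∑' i : {i | x i ∈ s}, c i := by
  rw [Measure.sum_apply _ hs, tsum_subtype]
  congr 1 with i
  by_cases hi : x i ∈ s <;> simp [Measure.dirac_apply' _ hs, hi]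

theorem ae_sum_smul_dirac {X ι : Type*} [MeasurableSpace X] [MeasurableSingletonClass X]
    [Countable ι] (c : ι → ℝ≥0∞) (x : ι → X) {P : X → Prop} (hP : ∀ i, P (x i)) :
    ∀ᵐ y ∂(Measure.sum fun i => c i • Measure.dirac (x i)), P y :=
  ae_sum_iff.2 fun i => ae_smul_measure (by rw [ae_dirac_eq]; exact hP i) _

end MeasureTheory.Measure

theorem exists_tsum_le_mul_iSup_iff {ι : Type*} {r : ι → ℝ} (hr : ∀ k, 0 < r k)
    (B : ι → ℝ≥0∞) {β : ℝ} (hβ : 0 < β) :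
    (∃ C > 0, ∀ Γ : Set ι, Γ.Nonempty →
        ∑' k : Γ, B k ≤ ENNReal.ofReal C * ⨆ k : Γ, ENNReal.ofReal (r k ^ β)) ↔
      ∃ C > 0, ∀ s > 0, ∑' k : {k | r k ≤ s}, B k ≤ ENNReal.ofReal (C * s ^ β) := by
  refine ⟨fun ⟨C, hC, h⟩ => ⟨C, hC, fun s hs => ?_⟩, fun ⟨C, hC, h⟩ => ⟨C, hC, fun Γ hΓ => ?_⟩⟩
  · rcases eq_empty_or_nonempty {k | r k ≤ s} with hempty | hne
    · simp [hempty]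
    refine (h _ hne).trans ?_
    rw [ENNReal.ofReal_mul hC.le]
    gcongr
    exact iSup_le fun k => ENNReal.ofReal_le_ofReal (Real.rpow_le_rpow (hr k).le k.2 hβ.le)
  · set M := ⨆ k : Γ, ENNReal.ofReal (r k ^ β)
    rcases eq_top_or_lt_top M with htop | hfin
    · simp [htop, hC]
    obtain ⟨k₀, hk₀⟩ := hΓ
    have hM : ∀ k : Γ, r k ^ β ≤ M.toReal := fun k =>
      (ENNReal.ofReal_le_iff_le_toReal hfin.ne).1
        (le_iSup (fun k : Γ => ENNReal.ofReal (r k ^ β)) k)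
    have hM₀ : 0 < M.toReal := (Real.rpow_pos_of_pos (hr k₀) β).trans_le (hM ⟨k₀, hk₀⟩)
    have hsub : Γ ⊆ {k | r k ≤ M.toReal ^ β⁻¹} := fun k hk =>
      (Real.le_rpow_inv_iff_of_pos (hr k).le hM₀.le hβ).2 (hM ⟨k, hk⟩)
    calc ∑' k : Γ, B k ≤ ∑' k : {k | r k ≤ M.toReal ^ β⁻¹}, B k :=
          ENNReal.tsum_mono_subtype B hsub
      _ ≤ ENNReal.ofReal (C * (M.toReal ^ β⁻¹) ^ β) := h _ (by positivity)
      _ = ENNReal.ofReal C * M := by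
        rw [Real.rpow_inv_rpow hM₀.le hβ.ne', ENNReal.ofReal_mul hC.le,
          ENNReal.ofReal_toReal hfin.ne]

theorem laplace_carleson_diagonal_sectorial_iff_general
    (p q α : ℝ) (hp : 1 < p) (hpq : p ≤ q) (hα : α < p - 1)
    (lam : ℕ → ℂ) (hlam : ∀ k, (lam k).re < 0) (b : ℕ → ℂ)
    (θ : ℝ)
    (hsector : ∀ k, |(-(lam k)).im| < (-(lam k)).re * Real.tan θ)
    (μ : Measure ℂ)
    (hμ : μ = Measure.sum fun k : ℕ =>
      (ENNReal.ofReal (‖b k‖ ^ q)) • Measure.dirac (-(lam k))) :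
    lcBounded p q (fun t => t ^ α) μ ↔
      ∃ C > 0, ∀ Γ : Set ℕ, Γ.Nonempty →
        ∑' k : Γ, ENNReal.ofReal (‖b (k : ℕ)‖ ^ q) ≤
          ENNReal.ofReal C *
            ⨆ k : Γ, ENNReal.ofReal
              ((-(lam (k : ℕ))).re ^ ((q / (p / (p - 1))) * (1 - α / (p - 1)))) := by
  have hr : ∀ k, 0 < (-(lam k)).re := fun k => by simpa using hlam k
  have hT : 0 ≤ Real.tan θ :=
    nonneg_of_mul_nonneg_right ((abs_nonneg _).trans (hsector 0).le) (hr 0)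
  have hexp : q / (p / (p - 1)) * (1 - α / (p - 1)) = q * ((p - 1 - α) / p) := by
    field_simp [show p - 1 ≠ 0 by linarith]
  have hβ : 0 < q * ((p - 1 - α) / p) :=
    mul_pos (by linarith) (div_pos (by linarith) (by linarith))
  have hstrip : ∀ s, μ {z | z.re ≤ s} =
      ∑' k : {k | (-(lam k)).re ≤ s}, ENNReal.ofReal (‖b k‖ ^ q) := fun s =>
    hμ ▸ Measure.sum_smul_dirac_apply _ _ (measurableSet_le measurable_re measurable_const)
  have hsupp : ∀ᵐ z ∂μ, 0 < z.re ∧ |z.im| ≤ Real.tan θ * z.re :=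
    hμ ▸ Measure.ae_sum_smul_dirac _ _ fun k =>
      ⟨hr k, by linarith [hsector k, mul_comm (Real.tan θ) (-(lam k)).re]⟩
  rw [hexp, exists_tsum_le_mul_iSup_iff hr (fun k => ENNReal.ofReal (‖b k‖ ^ q)) hβ]
  simp_rw [← hstrip]
  exact ⟨measure_re_le_of_lcBounded (by linarith) (by linarith) hT hsupp,
    fun ⟨_, _, hC⟩ => lcBounded_of_measure_re_le hp hpq hα (hsupp.mono fun _ h => h.1) hC⟩

/-- for eigenvalues `(λ_k)` with `-λ_k` in a sector `S(θ)` and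
`μ = Σ_k |b_k|^q δ_{-λ_k}`, the Laplace–Carleson embedding
`𝔏 : L^p_{t^α}(0,∞) → L^q(ℂ₊,μ)` is bounded (i.e. the control operator is
`L^p_{t^α}`-admissible) iff
`Σ_{k∈Γ} |b_k|^q ≤ C sup_{k∈Γ} (Re(-λ_k))^{(q/p')(1-α/(p-1))}` for all `Γ ⊆ ℕ`. -/
theorem laplace_carleson_diagonal_sectorial_iff
    (p q α : ℝ) (hp : 1 < p) (hpq : p ≤ q) (hα : α < p - 1)
    (lam : ℕ → ℂ) (hlam : ∀ k, (lam k).re < 0) (b : ℕ → ℂ)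
    (θ : ℝ) (hθ0 : 0 < θ) (hθ : θ < Real.pi / 2)
    (hsector : ∀ k, |(-(lam k)).im| < (-(lam k)).re * Real.tan θ)
    (μ : Measure ℂ)
    (hμ : μ = Measure.sum fun k : ℕ =>
      (ENNReal.ofReal (‖b k‖ ^ q)) • Measure.dirac (-(lam k))) :
    lcBounded p q (fun t => t ^ α) μ ↔
      ∃ C > 0, ∀ Γ : Set ℕ, Γ.Nonempty →
        ∑' k : Γ, ENNReal.ofReal (‖b (k : ℕ)‖ ^ q) ≤
          ENNReal.ofReal C *
            ⨆ k : Γ, ENNReal.ofReal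
              ((-(lam (k : ℕ))).re ^ ((q / (p / (p - 1))) * (1 - α / (p - 1)))) :=
  laplace_carleson_diagonal_sectorial_iff_general p q α hp hpq hα lam hlam b θ hsector μ hμ
end

section
/- Let μ := Σ_{n=1}^∞ (4ⁿ/n²) δ_{2ⁿ}, a positive Borel measure on ℂ₊ supported on the positive real axis (this measure arises from the parabolic diagonal system with λ_n = −2ⁿ and b_n = 2ⁿ/n). If α ≤ −1, then the Laplace–Carleson embedding 𝔏 : L²_{t^α}(0,∞) → L²(ℂ₊, μ) is bounded. -/
/-!
Cauchy–Schwarz against the weight gives, for `Re z > 0`,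
`|𝔏f(z)|² ≤ ‖f‖²_{t^α} ∫₀^∞ t^{-α} e^{-2t Re z} dt = ‖f‖²_{t^α} Γ(1-α) (2 Re z)^{α-1}`.
At the atom `s = 2ⁿ` of `μ` the mass `s²/n²` times `(2s)^{α-1}` is at most `1/(4n²)` once
`α ≤ -1`, so `∫ |𝔏f|² dμ ≤ Γ(1-α)/4 · (∑ 1/n²) · ‖f‖²_{t^α}`.
-/

open MeasureTheory Set Complex Filter ENNReal

lemma laplaceT_enorm_le (f : ℝ → ℂ) (z : ℂ) :
    ‖laplaceT f z‖ₑ ≤ ∫⁻ t in Ioi 0, ‖f t‖ₑ * ENNReal.ofReal (Real.exp (-(t * z.re))) := by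
  refine (enorm_integral_le_lintegral_enorm _).trans_eq (lintegral_congr fun t => ?_)
  rw [enorm_mul, ← ofReal_norm (Complex.exp _), Complex.norm_exp]
  simp

lemma laplaceT_enorm_le_lpwNorm_mul {w : ℝ → ℝ} (hw : Measurable w) (hw_pos : ∀ t > 0, 0 < w t)
    {f : ℝ → ℂ} (hf : Measurable f) (z : ℂ) :
    ‖laplaceT f z‖ₑ ≤ lpwNorm 2 w f *
      (∫⁻ t in Ioi 0, ENNReal.ofReal (Real.exp (-(2 * z.re * t)) / w t)) ^ (1 / (2 : ℝ)) := by
  -- Cauchy–Schwarz after splitting `e^{-t Re z} = √(w t) · (e^{-t Re z} / √(w t))`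
  set F : ℝ → ℝ≥0∞ := fun t => ‖f t‖ₑ * ENNReal.ofReal √(w t)
  set G : ℝ → ℝ≥0∞ := fun t => ENNReal.ofReal (Real.exp (-(t * z.re)) / √(w t))
  have hFG : ∀ t ∈ Ioi (0 : ℝ), ‖f t‖ₑ * ENNReal.ofReal (Real.exp (-(t * z.re))) = F t * G t := by
    intro t ht
    have : 0 < √(w t) := Real.sqrt_pos.2 (hw_pos t ht)
    rw [mul_assoc, ← ENNReal.ofReal_mul this.le, mul_div_cancel₀ _ this.ne']
  have hF : ∀ t ∈ Ioi (0 : ℝ), F t ^ (2 : ℝ) = ‖f t‖ₑ ^ (2 : ℝ) * ENNReal.ofReal (w t) := by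
    intro t ht
    rw [ENNReal.mul_rpow_of_nonneg _ _ zero_le_two, ENNReal.ofReal_rpow_of_nonneg
      (Real.sqrt_nonneg _) zero_le_two, Real.rpow_two, Real.sq_sqrt (hw_pos t ht).le]
  have hG : ∀ t ∈ Ioi (0 : ℝ),
      G t ^ (2 : ℝ) = ENNReal.ofReal (Real.exp (-(2 * z.re * t)) / w t) := by
    intro t ht
    rw [ENNReal.ofReal_rpow_of_nonneg (by positivity) zero_le_two, Real.rpow_two, div_pow,
      Real.sq_sqrt (hw_pos t ht).le, ← Real.exp_nat_mul]
    ring_nf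
  calc ‖laplaceT f z‖ₑ ≤ ∫⁻ t in Ioi 0, F t * G t :=
        (laplaceT_enorm_le f z).trans_eq (setLIntegral_congr_fun measurableSet_Ioi hFG)
    _ ≤ (∫⁻ t in Ioi 0, F t ^ (2 : ℝ)) ^ (1 / (2 : ℝ)) *
        (∫⁻ t in Ioi 0, G t ^ (2 : ℝ)) ^ (1 / (2 : ℝ)) :=
      ENNReal.lintegral_mul_le_Lp_mul_Lq _ .two_two (by fun_prop) (by fun_prop)
    _ = _ := by
      rw [setLIntegral_congr_fun measurableSet_Ioi hF,
        setLIntegral_congr_fun measurableSet_Ioi hG]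
      rfl

lemma lintegral_rpow_mul_exp_neg_mul_Ioi {a r : ℝ} (ha : 0 < a) (hr : 0 < r) :
    ∫⁻ t in Ioi 0, ENNReal.ofReal (t ^ (a - 1) * Real.exp (-(r * t))) =
      ENNReal.ofReal ((1 / r) ^ a * Real.Gamma a) := by
  have hint : IntegrableOn (fun t : ℝ => t ^ (a - 1) * Real.exp (-(r * t))) (Ioi 0) := by
    simpa using integrableOn_rpow_mul_exp_neg_mul_rpow (s := a - 1) (by linarith) one_pos hr
  rw [← Real.integral_rpow_mul_exp_neg_mul_Ioi ha hr, ofReal_integral_eq_lintegral_ofReal hint]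
  exact (ae_restrict_iff' measurableSet_Ioi).2 (.of_forall fun t (ht : 0 < t) => by positivity)

lemma laplaceT_enorm_sq_le {α : ℝ} (hα : α < 1) {f : ℝ → ℂ} (hf : Measurable f) {z : ℂ}
    (hz : 0 < z.re) :
    ‖laplaceT f z‖ₑ ^ (2 : ℝ) ≤ lpwNorm 2 (fun t => t ^ α) f ^ (2 : ℝ) *
      ENNReal.ofReal ((1 / (2 * z.re)) ^ (1 - α) * Real.Gamma (1 - α)) := by
  have hJ : ∫⁻ t in Ioi 0, ENNReal.ofReal (Real.exp (-(2 * z.re * t)) / t ^ α) =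
      ENNReal.ofReal ((1 / (2 * z.re)) ^ (1 - α) * Real.Gamma (1 - α)) := by
    rw [← lintegral_rpow_mul_exp_neg_mul_Ioi (by linarith) (by positivity)]
    refine setLIntegral_congr_fun measurableSet_Ioi fun t (ht : 0 < t) => ?_
    rw [div_eq_mul_inv, ← Real.rpow_neg ht.le, sub_sub_cancel_left, mul_comm]
  have h := laplaceT_enorm_le_lpwNorm_mul (by fun_prop) (fun t ht => Real.rpow_pos_of_pos ht α) hf z
  rw [hJ] at h
  calc ‖laplaceT f z‖ₑ ^ (2 : ℝ) ≤ _ := ENNReal.rpow_le_rpow h zero_le_two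
    _ = _ := by
      rw [ENNReal.mul_rpow_of_nonneg _ _ zero_le_two, ← ENNReal.rpow_mul]
      norm_num

lemma sq_mul_one_div_two_mul_rpow_le {α s : ℝ} (hα : α ≤ -1) (hs : 1 / 2 ≤ s) :
    s ^ 2 * (1 / (2 * s)) ^ (1 - α) ≤ 1 / 4 := by
  have h2s : 1 ≤ 2 * s := by linarith
  calc s ^ 2 * (1 / (2 * s)) ^ (1 - α) ≤ s ^ 2 * (1 / (2 * s)) ^ (2 : ℝ) := by
        refine mul_le_mul_of_nonneg_left ?_ (sq_nonneg s)
        exact Real.rpow_le_rpow_of_exponent_ge (one_div_pos.2 (by linarith))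
          ((div_le_one (by linarith)).2 h2s) (by linarith)
    _ = 1 / 4 := by
      rw [Real.rpow_two]
      field_simp
      ring

lemma re_sq_mul_laplaceT_enorm_sq_le {α : ℝ} (hα : α ≤ -1) {f : ℝ → ℂ} (hf : Measurable f)
    {z : ℂ} (hz : 1 / 2 ≤ z.re) :
    ENNReal.ofReal (z.re ^ 2) * ‖laplaceT f z‖ₑ ^ (2 : ℝ) ≤
      ENNReal.ofReal (Real.Gamma (1 - α) / 4) * lpwNorm 2 (fun t => t ^ α) f ^ (2 : ℝ) := by
  have hΓ : 0 ≤ Real.Gamma (1 - α) := Real.Gamma_nonneg_of_nonneg (by linarith)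
  have hweight := sq_mul_one_div_two_mul_rpow_le hα hz
  calc ENNReal.ofReal (z.re ^ 2) * ‖laplaceT f z‖ₑ ^ (2 : ℝ)
      ≤ ENNReal.ofReal (z.re ^ 2) * (lpwNorm 2 (fun t => t ^ α) f ^ (2 : ℝ) *
          ENNReal.ofReal ((1 / (2 * z.re)) ^ (1 - α) * Real.Gamma (1 - α))) := by
        gcongr
        exact laplaceT_enorm_sq_le (by linarith) hf (by linarith)
    _ = ENNReal.ofReal (z.re ^ 2 * (1 / (2 * z.re)) ^ (1 - α) * Real.Gamma (1 - α)) *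
          lpwNorm 2 (fun t => t ^ α) f ^ (2 : ℝ) := by
        rw [mul_assoc, ENNReal.ofReal_mul (sq_nonneg _)]
        ring
    _ ≤ _ := by
        gcongr
        nlinarith

lemma lcBounded_two_of_lintegral_le {w : ℝ → ℝ} {μ : Measure ℂ} {K : ℝ≥0∞} (hK : K ≠ ∞)
    (h : ∀ f : ℝ → ℂ, Measurable f →
      ∫⁻ z, ‖laplaceT f z‖ₑ ^ (2 : ℝ) ∂μ ≤ K * lpwNorm 2 w f ^ (2 : ℝ)) :
    lcBounded 2 2 w μ := by
  refine ⟨K.toReal ^ (1 / (2 : ℝ)) + 1, by positivity, fun f hf => ?_⟩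
  calc (∫⁻ z, ‖laplaceT f z‖ₑ ^ (2 : ℝ) ∂μ) ^ (1 / (2 : ℝ))
      ≤ (K * lpwNorm 2 w f ^ (2 : ℝ)) ^ (1 / (2 : ℝ)) := by gcongr; exact h f hf
    _ = K ^ (1 / (2 : ℝ)) * lpwNorm 2 w f := by
        rw [ENNReal.mul_rpow_of_nonneg _ _ (by norm_num), ← ENNReal.rpow_mul]
        norm_num
    _ ≤ ENNReal.ofReal (K.toReal ^ (1 / (2 : ℝ)) + 1) * lpwNorm 2 w f := by
        gcongr
        rw [← ENNReal.ofReal_toReal hK, ENNReal.ofReal_rpow_of_nonneg ENNReal.toReal_nonneg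
          (by norm_num), ENNReal.toReal_ofReal ENNReal.toReal_nonneg]
        exact ENNReal.ofReal_le_ofReal (by linarith)

/-- for the parabolic diagonal system measure
`μ = Σ_{n≥1} (4ⁿ/n²) δ_{2ⁿ}`, if `α ≤ -1` then the Laplace–Carleson embedding
`𝔏 : L²_{t^α}(0,∞) → L²(ℂ₊,μ)` is bounded. -/
theorem parabolic_system_weighted_admissible
    (α : ℝ) (hα : α ≤ -1)
    (μ : Measure ℂ)
    (hμ : μ = Measure.sum fun n : ℕ =>
      (ENNReal.ofReal ((4 : ℝ) ^ (n + 1) / ((n : ℝ) + 1) ^ 2)) •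
        Measure.dirac ((2 : ℂ) ^ (n + 1))) :
    lcBounded 2 2 (fun t => t ^ α) μ := by
  have hsum : Summable fun n : ℕ => 1 / ((n : ℝ) + 1) ^ 2 := by
    simpa using (summable_nat_add_iff 1).2 (Real.summable_one_div_nat_pow.2 one_lt_two)
  refine lcBounded_two_of_lintegral_le (K := ENNReal.ofReal (Real.Gamma (1 - α) / 4) *
    ∑' n : ℕ, ENNReal.ofReal (1 / ((n : ℝ) + 1) ^ 2))
    (ENNReal.mul_ne_top ENNReal.ofReal_ne_top hsum.tsum_ofReal_ne_top) fun f hf => ?_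
  subst hμ
  rw [lintegral_sum_measure, ← ENNReal.tsum_mul_left, ← ENNReal.tsum_mul_right]
  refine ENNReal.tsum_le_tsum fun n => ?_
  have hre : ((2 : ℂ) ^ (n + 1)).re = 2 ^ (n + 1) := by norm_cast
  have hc : (4 : ℝ) ^ (n + 1) / ((n : ℝ) + 1) ^ 2 =
      ((2 : ℂ) ^ (n + 1)).re ^ 2 * (1 / ((n : ℝ) + 1) ^ 2) := by
    have h4 : (4 : ℝ) ^ (n + 1) = ((2 : ℝ) ^ (n + 1)) ^ 2 := by
      rw [← pow_mul, mul_comm, pow_mul]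
      norm_num
    rw [hre, h4]
    ring
  rw [lintegral_smul_measure, lintegral_dirac, smul_eq_mul, hc, ENNReal.ofReal_mul (sq_nonneg _),
    mul_right_comm, mul_right_comm (ENNReal.ofReal (Real.Gamma _ / 4))]
  gcongr ?_ * _
  refine re_sq_mul_laplaceT_enorm_sq_le hα hf ?_
  rw [hre]
  exact le_trans (by norm_num) (one_le_pow₀ one_le_two)
end

section
/- Let μ := Σ_{n=1}^∞ (4ⁿ/n²) δ_{2ⁿ}, a positive Borel measure on ℂ₊ supported on the positive real axis. If −1 < α < 1, then the Laplace–Carleson embedding 𝔏 : L²_{t^α}(0,∞) → L²(ℂ₊, μ) is NOT bounded; that is, there is no constant C > 0 with (∫_{ℂ₊} |𝔏f|² dμ)^{1/2} ≤ C ‖f‖_{L²_{t^α}} for all f ∈ L²_{t^α}(0,∞). -/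
/-!
Test the embedding on `f = 1_(0, 2^{-n})`. Its Laplace transform at `2^n` is `(1 - e⁻¹) 2^{-n}`, so
the atom of `μ` at `2^n` alone contributes `(1 - e⁻¹)² / n²` to `‖𝔏 f‖²`, while
`‖f‖² = 2^{-n(α+1)} / (α + 1)` decays geometrically in `n`.
-/

open MeasureTheory Set Complex Filter ENNReal

theorem laplaceT_indicator_Ioo {b : ℝ} (hb : 0 < b) {z : ℂ} (hz : z ≠ 0) :
    laplaceT ((Ioo 0 b).indicator 1) z = (1 - exp (-z * b)) / z := by
  have hf : ∀ t : ℝ, (Ioo 0 b).indicator 1 t * exp (-(t : ℂ) * z)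
      = (Ioo 0 b).indicator (fun t : ℝ => exp (-z * t)) t := by
    intro t
    by_cases ht : t ∈ Ioo 0 b
    · simp [indicator_of_mem ht, mul_comm]
    · simp [indicator_of_notMem ht]
  simp_rw [laplaceT, hf]
  rw [setIntegral_indicator measurableSet_Ioo, inter_eq_right.mpr Ioo_subset_Ioi_self,
    ← integral_Ioc_eq_integral_Ioo, ← intervalIntegral.integral_of_le hb.le,
    integral_exp_mul_complex (neg_ne_zero.mpr hz), Complex.ofReal_zero, mul_zero, exp_zero,
    div_neg, ← neg_div, neg_sub]

theorem laplaceT_indicator_Ioo_inv {x : ℝ} (hx : 0 < x) :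
    laplaceT ((Ioo 0 x⁻¹).indicator 1) x = ((1 - Real.exp (-1)) / x : ℝ) := by
  have hx' : (x : ℂ) ≠ 0 := ofReal_ne_zero.mpr hx.ne'
  rw [laplaceT_indicator_Ioo (inv_pos.mpr hx) hx', ofReal_inv, neg_mul, mul_inv_cancel₀ hx']
  push_cast
  rfl

theorem enorm_laplaceT_indicator_Ioo_inv_sq {x : ℝ} (hx : 0 < x) :
    (‖laplaceT ((Ioo 0 x⁻¹).indicator 1) x‖₊ : ℝ≥0∞) ^ (2 : ℝ)
      = ENNReal.ofReal ((1 - Real.exp (-1)) ^ 2 / x ^ 2) := by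
  rw [laplaceT_indicator_Ioo_inv hx, ENNReal.rpow_two, ← enorm_eq_nnnorm, ← ofReal_norm,
    Complex.norm_real, ← ENNReal.ofReal_pow (norm_nonneg _), Real.norm_eq_abs, sq_abs, div_pow]

theorem lintegral_indicator_Ioo_rpow_weight {p α b : ℝ} (hp : 0 < p) (hα : -1 < α) (hb : 0 < b) :
    ∫⁻ t in Ioi 0, (‖(Ioo 0 b).indicator (1 : ℝ → ℂ) t‖₊ : ℝ≥0∞) ^ p * ENNReal.ofReal (t ^ α)
      = ENNReal.ofReal (b ^ (α + 1) / (α + 1)) := by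
  have hf : ∀ t : ℝ, (‖(Ioo 0 b).indicator (1 : ℝ → ℂ) t‖₊ : ℝ≥0∞) ^ p * ENNReal.ofReal (t ^ α)
      = (Ioo 0 b).indicator (fun t => ENNReal.ofReal (t ^ α)) t := by
    intro t
    by_cases ht : t ∈ Ioo 0 b
    · simp [indicator_of_mem ht]
    · simp [indicator_of_notMem ht, ENNReal.zero_rpow_of_pos hp]
  have hint : IntegrableOn (fun t : ℝ => t ^ α) (Ioc 0 b) :=
    (intervalIntegrable_iff_integrableOn_Ioc_of_le hb.le).mp
      (intervalIntegral.intervalIntegrable_rpow' hα)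
  simp_rw [hf]
  rw [lintegral_indicator measurableSet_Ioo, Measure.restrict_restrict measurableSet_Ioo,
    inter_eq_left.mpr Ioo_subset_Ioi_self, setLIntegral_congr Ioo_ae_eq_Ioc,
    ← ofReal_integral_eq_lintegral_ofReal hint
      ((ae_restrict_iff' measurableSet_Ioc).2 (.of_forall fun t ht => Real.rpow_nonneg ht.1.le α)),
    ← intervalIntegral.integral_of_le hb.le, integral_rpow (Or.inl hα),
    Real.zero_rpow (by linarith), sub_zero]

theorem lcBounded.exists_lintegral_le {p : ℝ} (hp : 0 < p) {w : ℝ → ℝ} {μ : Measure ℂ}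
    (h : lcBounded p p w μ) :
    ∃ C > 0, ∀ f : ℝ → ℂ, Measurable f →
      ∫⁻ z, (‖laplaceT f z‖₊ : ℝ≥0∞) ^ p ∂μ
        ≤ ENNReal.ofReal C * ∫⁻ t in Ioi 0, (‖f t‖₊ : ℝ≥0∞) ^ p * ENNReal.ofReal (w t) := by
  obtain ⟨C, hC, hbound⟩ := h
  refine ⟨C ^ p, Real.rpow_pos_of_pos hC p, fun f hf => ?_⟩
  have := ENNReal.rpow_le_rpow (hbound f hf) hp.le
  rwa [lpwNorm, ENNReal.mul_rpow_of_nonneg _ _ hp.le, one_div, ENNReal.rpow_inv_rpow hp.ne',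
    ENNReal.rpow_inv_rpow hp.ne', ENNReal.ofReal_rpow_of_pos hC] at this

theorem le_of_lintegral_laplaceT_indicator_le {α C w x : ℝ} (hα : -1 < α) (hC : 0 ≤ C)
    (hx : 0 < x) {μ : Measure ℂ} (hμ : ENNReal.ofReal w • Measure.dirac (x : ℂ) ≤ μ)
    (hle : ∫⁻ z, (‖laplaceT ((Ioo 0 x⁻¹).indicator 1) z‖₊ : ℝ≥0∞) ^ (2 : ℝ) ∂μ
      ≤ ENNReal.ofReal C * ∫⁻ t in Ioi 0,
        (‖(Ioo 0 x⁻¹).indicator (1 : ℝ → ℂ) t‖₊ : ℝ≥0∞) ^ (2 : ℝ) * ENNReal.ofReal (t ^ α)) :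
    w * ((1 - Real.exp (-1)) ^ 2 / x ^ 2) ≤ C * (x⁻¹ ^ (α + 1) / (α + 1)) := by
  have hnorm : 0 ≤ x⁻¹ ^ (α + 1) / (α + 1) := div_nonneg (by positivity) (by linarith)
  have hatom := (lintegral_mono' hμ le_rfl).trans hle
  rwa [lintegral_smul_measure, lintegral_dirac, enorm_laplaceT_indicator_Ioo_inv_sq hx,
    lintegral_indicator_Ioo_rpow_weight two_pos hα (inv_pos.2 hx), smul_eq_mul,
    ← ENNReal.ofReal_mul' (by positivity), ← ENNReal.ofReal_mul hC,
    ENNReal.ofReal_le_ofReal_iff (mul_nonneg hC hnorm)] at hatom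

theorem inv_pow_rpow {a : ℝ} (ha : 0 ≤ a) (n : ℕ) (s : ℝ) :
    (a ^ n)⁻¹ ^ s = (a ^ (-s)) ^ n := by
  rw [← Real.rpow_mul_natCast ha, ← Real.rpow_natCast, ← Real.rpow_neg ha, ← Real.rpow_mul ha]
  ring_nf

theorem exists_mul_pow_lt_div_sq {ε K r : ℝ} (hε : 0 < ε) (hr : |r| < 1) :
    ∃ n : ℕ, K * r ^ (n + 1) < ε / ((n : ℝ) + 1) ^ 2 := by
  have hlim : Tendsto (fun n : ℕ => K * (((n + 1 : ℕ) : ℝ) ^ 2 * r ^ (n + 1))) atTop (nhds 0) := by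
    simpa using ((tendsto_pow_const_mul_const_pow_of_abs_lt_one 2 hr).comp
      (tendsto_add_atTop_nat 1)).const_mul K
  obtain ⟨n, hn⟩ := (hlim.eventually_lt_const hε).exists
  refine ⟨n, (lt_div_iff₀ (by positivity)).mpr ?_⟩
  push_cast at hn
  linarith

theorem parabolic_system_weighted_not_admissible_general
    (α : ℝ) (hα1 : -1 < α)
    (μ : Measure ℂ)
    (hμ : μ = Measure.sum fun n : ℕ =>
      (ENNReal.ofReal ((4 : ℝ) ^ (n + 1) / ((n : ℝ) + 1) ^ 2)) •
        Measure.dirac ((2 : ℂ) ^ (n + 1))) :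
    ¬ lcBounded 2 2 (fun t => t ^ α) μ := by
  intro hbdd
  obtain ⟨C, hC, hle⟩ := hbdd.exists_lintegral_le two_pos
  set r : ℝ := (2 : ℝ) ^ (-(α + 1))
  have key (n : ℕ) : (1 - Real.exp (-1)) ^ 2 / ((n : ℝ) + 1) ^ 2 ≤ C / (α + 1) * r ^ (n + 1) := by
    have hx : (0 : ℝ) < 2 ^ (n + 1) := by positivity
    have hatom : ENNReal.ofReal ((4 : ℝ) ^ (n + 1) / ((n : ℝ) + 1) ^ 2) •
        Measure.dirac (((2 : ℝ) ^ (n + 1) : ℝ) : ℂ) ≤ μ := by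
      rw [hμ]; push_cast; exact Measure.le_sum _ n
    convert le_of_lintegral_laplaceT_indicator_le hα1 hC.le hx hatom
      (hle _ (measurable_const.indicator measurableSet_Ioo)) using 1
    · rw [show (4 : ℝ) ^ (n + 1) = ((2 : ℝ) ^ (n + 1)) ^ 2 by
        rw [← pow_mul, mul_comm, pow_mul]; norm_num]
      field_simp
    · rw [inv_pow_rpow zero_le_two]
      ring
  have hr : |r| < 1 := by
    rw [abs_of_pos (by positivity)]
    exact Real.rpow_lt_one_of_one_lt_of_neg one_lt_two (by linarith)
  have hc : 0 < (1 - Real.exp (-1)) ^ 2 :=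
    pow_pos (sub_pos.mpr (Real.exp_lt_one_iff.mpr neg_one_lt_zero)) 2
  obtain ⟨n, hn⟩ := exists_mul_pow_lt_div_sq (K := C / (α + 1)) hc hr
  exact (key n).not_gt hn

/-- for the parabolic diagonal system measure
`μ = Σ_{n≥1} (4ⁿ/n²) δ_{2ⁿ}`, if `-1 < α < 1` then the Laplace–Carleson embedding
`𝔏 : L²_{t^α}(0,∞) → L²(ℂ₊,μ)` is NOT bounded. -/
theorem parabolic_system_weighted_not_admissible
    (α : ℝ) (hα1 : -1 < α) (hα2 : α < 1)
    (μ : Measure ℂ)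
    (hμ : μ = Measure.sum fun n : ℕ =>
      (ENNReal.ofReal ((4 : ℝ) ^ (n + 1) / ((n : ℝ) + 1) ^ 2)) •
        Measure.dirac ((2 : ℂ) ^ (n + 1))) :
    ¬ lcBounded 2 2 (fun t => t ^ α) μ :=
  parabolic_system_weighted_not_admissible_general α hα1 μ hμ
end
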